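/- arXiv:0901.1918 — 7 statements merged into one kernel-verified Lean document; each statement's English description precedes it below -/
import Mathlib

section
/- Let q ∈ (−1,0). Then for every integer k ≥ 0 the even moments of μ_q are given by ∫ x^{2k} dμ_q(x) = (q+1)/(q−1) · 1/(k+1) · ∑_{r=−k−1}^{k+1} (−1)^r · C(2k+2, k+1+r) · r/(1+q^r), and all odd moments vanish: ∫ x^{2k+1} dμ_q(x) = 0 for every integer k ≥ 0. (Here C(m,j) denotes the binomial coefficient, equal to 0 when j < 0 or j > m; the r = 0 term of the sum is 0; all denominators 1+q^r are nonzero since |q^r| ≠ 1 for r ≠ 0.) -/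
open MeasureTheory

/-- `c q r` for `r ≥ 1`: the Fourier coefficient `q^(r-1)(1+q)^2/((1+q^(r+1))(1+q^(r-1)))`. -/
noncomputable def circCoeff (q : ℝ) (r : ℕ) : ℝ :=
  q ^ (r - 1) * (1 + q) ^ 2 / ((1 + q ^ (r + 1)) * (1 + q ^ (r - 1)))

/-- The circular density `F_q(t) = 1 + 2 ∑_{r≥1} (-1)^r c_r(q) cos(2rt)`. -/
noncomputable def circDensity (q : ℝ) (t : ℝ) : ℝ :=
  1 + 2 * ∑' r : ℕ, (-1 : ℝ) ^ (r + 1) * circCoeff q (r + 1) * Real.cos (2 * (r + 1) * t)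

/-- The measure `μ_q`: pushforward under `t ↦ 2 cos t` of the measure on `[0, 2π]`
with density `F_q(t)/(2π)`. -/
noncomputable def muQ (q : ℝ) : Measure ℝ :=
  Measure.map (fun t => 2 * Real.cos t)
    ((volume.restrict (Set.Icc 0 (2 * Real.pi))).withDensity
      (fun t => ENNReal.ofReal (circDensity q t / (2 * Real.pi))))

/-!
Write `F_q(t) = 1 + 2 ∑_{r ≥ 0} b_r cos (2(r+1)t)` with `b_r = (-1)^(r+1) c_{r+1}` and
`g_s = (1 - q^s)/(1 + q^s)`. For `-1 < q < 0` every `b_r` is nonpositive, `|b_r| ≤ |q|^r`, and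
`2 b_r = (q+1)/(q-1) · (-1)^(r+1) (g_r - g_{r+2})`, which telescopes to `∑ b_r = -1/2`. Hence
`F_q(t) ≥ F_q(0) = 0`, so `μ_q` has the real density `F_q/(2π)`.

Expanding `(2 cos t)^n cos (mt)` by the binomial theorem and integrating the series term by term
over a period kills the odd moments and gives
`∫ x^{2k} dμ_q = C(2k,k) + 2 ∑_{r<k} b_r C(2k,k+r+1)`.
In the symmetric sum of the statement the terms at `±r` combine to `(-1)^r C(2k+2,k+1+r) r g_r`,
and `r C(2k+2,k+1+r) = (k+1)(C(2k,k+r-1) - C(2k,k+r+1))`; a summation by parts against the second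
differences of `g` then matches the two expressions.
-/

open Real Finset Filter Topology

theorem two_cos_pow_mul_cos (n : ℕ) (m : ℤ) (t : ℝ) :
    (2 * cos t) ^ n * cos (m * t) =
      ∑ j ∈ range (n + 1), (n.choose j : ℝ) * cos (((n - 2 * j + m : ℤ) : ℝ) * t) := by
  open Complex in
  have key : ((2 * Real.cos t) ^ n * Real.cos (m * t) : ℝ) =
      ((exp (-t * I) + exp (t * I)) ^ n * exp ((m * t : ℝ) * I)).re := by
    rw [add_comm, ← two_cos, ← ofReal_cos, ← ofReal_ofNat, ← ofReal_mul, ← ofReal_pow,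
      re_ofReal_mul, exp_ofReal_mul_I_re]
  rw [key, add_pow, sum_mul, Complex.re_sum]
  refine sum_congr rfl fun j hj => ?_
  have hjn : j ≤ n := Nat.lt_succ_iff.mp (mem_range.mp hj)
  open Complex in
  have : exp (-t * I) ^ j * exp (t * I) ^ (n - j) * (n.choose j : ℂ) * exp ((m * t : ℝ) * I) =
      ((n.choose j : ℝ) : ℂ) * exp (((n - 2 * j + m : ℤ) : ℝ) * t * I) := by
    rw [← Complex.exp_nat_mul, ← Complex.exp_nat_mul, ← Complex.exp_add, mul_right_comm,
      ← Complex.exp_add]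
    push_cast [Nat.cast_sub hjn]
    ring_nf
  rw [this, Complex.re_ofReal_mul, ← Complex.ofReal_mul, Complex.exp_ofReal_mul_I_re]

theorem integral_cos_int_mul (m : ℤ) :
    ∫ t in (0 : ℝ)..2 * π, cos (m * t) = if m = 0 then 2 * π else 0 := by
  split_ifs with hm
  · simp [hm]
  · have hm' : (m : ℝ) ≠ 0 := Int.cast_ne_zero.mpr hm
    rw [intervalIntegral.integral_comp_mul_left cos hm', integral_cos, mul_zero, sin_zero,
      show (m : ℝ) * (2 * π) = (2 * m : ℤ) * π by push_cast; ring, sin_int_mul_pi]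
    simp

theorem integral_two_cos_pow_mul_cos (n : ℕ) (m : ℤ) :
    ∫ t in (0 : ℝ)..2 * π, (2 * cos t) ^ n * cos (m * t) =
      2 * π * ∑ j ∈ range (n + 1),
        if (n : ℤ) - 2 * j + m = 0 then (n.choose j : ℝ) else 0 := by
  simp_rw [two_cos_pow_mul_cos]
  rw [intervalIntegral.integral_finsetSum
    fun j _ => (by fun_prop : Continuous _).intervalIntegrable _ _, mul_sum]
  refine sum_congr rfl fun j _ => ?_
  rw [intervalIntegral.integral_const_mul, integral_cos_int_mul]
  split_ifs <;> ring

theorem integral_two_cos_pow_even_mul_cos (k l : ℕ) :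
    ∫ t in (0 : ℝ)..2 * π, (2 * cos t) ^ (2 * k) * cos (2 * l * t) =
      2 * π * (2 * k).choose (k + l) := by
  have h := integral_two_cos_pow_mul_cos (2 * k) (2 * l)
  push_cast at h
  rw [h]
  have hcond : ∀ j : ℕ, (2 * (k : ℤ) - 2 * j + 2 * l = 0 ↔ j = k + l) := fun j => by omega
  simp_rw [hcond, sum_ite_eq', mem_range]
  split_ifs with hkl
  · rfl
  · rw [Nat.choose_eq_zero_of_lt (by omega), Nat.cast_zero]

theorem integral_two_cos_pow_odd_mul_cos (k l : ℕ) :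
    ∫ t in (0 : ℝ)..2 * π, (2 * cos t) ^ (2 * k + 1) * cos (2 * l * t) = 0 := by
  have h := integral_two_cos_pow_mul_cos (2 * k + 1) (2 * l)
  push_cast at h
  rw [h, sum_eq_zero fun j _ => if_neg (by omega), mul_zero]

theorem sum_Icc_neg_self {M : Type*} [AddCommMonoid M] (T : ℤ → M) (n : ℕ) :
    ∑ r ∈ Icc (-(n : ℤ)) n, T r = T 0 + ∑ m ∈ range n, (T (m + 1) + T (-(m + 1))) := by
  induction n with
  | zero => simp
  | succ n ih =>
    have hIcc : Icc (-((n + 1 : ℕ) : ℤ)) (n + 1 : ℕ) =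
        insert (-((n : ℤ) + 1)) (insert ((n : ℤ) + 1) (Icc (-(n : ℤ)) n)) := by
      ext r; simp only [mem_Icc, mem_insert]; omega
    rw [hIcc, sum_insert (by simp; omega), sum_insert (by simp), ih, sum_range_succ]
    abel

theorem add_one_mul_choose_eq {k s : ℕ} (hs : s ≤ k) :
    ((s : ℝ) + 1) * (2 * k + 2).choose (k + s + 2) =
      ((k : ℝ) + 1) * ((2 * k).choose (k + s) - (2 * k).choose (k + s + 2)) := by
  have h1 := Nat.add_one_mul_choose_eq (2 * k + 1) (k + s + 1)
  have h2 := Nat.choose_mul_succ_eq (2 * k + 1) (k + s + 2)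
  have p1 := Nat.choose_succ_succ (2 * k) (k + s)
  have p2 := Nat.choose_succ_succ (2 * k) (k + s + 1)
  rw [show 2 * k + 1 + 1 - (k + s + 2) = k - s by omega] at h2
  have hks : ((k - s : ℕ) : ℝ) = k - s := Nat.cast_sub hs
  apply_fun ((↑) : ℕ → ℝ) at h1 h2 p1 p2
  push_cast [hks] at h1 h2 p1 p2
  linear_combination
    (-1 / 2 : ℝ) * h1 + (1 / 2 : ℝ) * h2 + ((k : ℝ) + 1) * p1 - ((k : ℝ) + 1) * p2

theorem sum_range_by_parts_alternating (A g : ℕ → ℝ) (k : ℕ) :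
    ∑ s ∈ range (k + 1), (-1) ^ (s + 1) * (A s - A (s + 2)) * g (s + 1) =
      ∑ s ∈ range k, (-1) ^ (s + 1) * A (s + 1) * (g s - g (s + 2)) + (A 1 * g 0 - A 0 * g 1)
        - (-1) ^ k * A (k + 1) * g k - (-1) ^ (k + 1) * A (k + 2) * g (k + 1) := by
  induction k with
  | zero => simp; ring
  | succ k ih =>
    rw [sum_range_succ, ih, sum_range_succ]
    ring

noncomputable def densityCoeff (q : ℝ) (r : ℕ) : ℝ := (-1) ^ (r + 1) * circCoeff q (r + 1)

noncomputable def powRatio (q : ℝ) (s : ℕ) : ℝ := (1 - q ^ s) / (1 + q ^ s)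

theorem circDensity_eq (q t : ℝ) :
    circDensity q t = 1 + 2 * ∑' r, densityCoeff q r * cos (2 * (r + 1) * t) := rfl

theorem densityCoeff_eq (q : ℝ) (r : ℕ) :
    densityCoeff q r = -((-q) ^ r * (1 + q) ^ 2 / ((1 + q ^ (r + 2)) * (1 + q ^ r))) := by
  rw [densityCoeff, circCoeff, Nat.add_sub_cancel, neg_pow, pow_succ]
  ring

theorem tendsto_powRatio {q : ℝ} (hq : |q| < 1) : Tendsto (powRatio q) atTop (𝓝 1) := by
  have h := tendsto_pow_atTop_nhds_zero_of_abs_lt_one hq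
  have := (tendsto_const_nhds (x := (1 : ℝ))).sub h |>.div
    ((tendsto_const_nhds (x := (1 : ℝ))).add h) (by norm_num)
  rwa [sub_zero, add_zero, div_one] at this

noncomputable def evenMomentSummand (q : ℝ) (k : ℕ) (r : ℤ) : ℝ :=
  (-1) ^ r * ((2 * k + 2).choose ((k : ℤ) + 1 + r).toNat : ℝ) * ((r : ℝ) / (1 + q ^ r))

theorem evenMomentSummand_add_neg {q : ℝ} (hq : q ≠ 0) {k s : ℕ} (hs : s ≤ k)
    (hden : 1 + q ^ (s + 1) ≠ 0) :
    evenMomentSummand q k (s + 1) + evenMomentSummand q k (-(s + 1)) =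
      (-1) ^ (s + 1) * (2 * k + 2).choose (k + s + 2) * ((s + 1) * powRatio q (s + 1)) := by
  have hpow : q ^ (s + 1) ≠ 0 := pow_ne_zero _ hq
  have hsign : ((-1 : ℝ) ^ (s + 1))⁻¹ = (-1) ^ (s + 1) := by
    rw [← inv_pow, inv_neg, inv_one]
  have hsymm : (2 * k + 2).choose (k - s) = (2 * k + 2).choose (k + s + 2) := by
    rw [← Nat.choose_symm (by omega)]; congr 1; omega
  simp only [evenMomentSummand, zpow_neg, zpow_natCast,
    show ((s : ℤ) + 1) = ((s + 1 : ℕ) : ℤ) by push_cast; rfl, hsign,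
    show ((k : ℤ) + 1 + (s + 1 : ℕ)).toNat = k + s + 2 by omega,
    show ((k : ℤ) + 1 + -(s + 1 : ℕ)).toNat = k - s by omega, hsymm, powRatio]
  rw [show 1 + (q ^ (s + 1))⁻¹ = (1 + q ^ (s + 1)) / q ^ (s + 1) by field_simp; ring]
  push_cast
  field_simp
  ring

section

variable {q : ℝ} (hq : q ∈ Set.Ioo (-1 : ℝ) 0)
include hq

theorem abs_lt_one_of_mem_Ioo : |q| < 1 := abs_lt.mpr ⟨hq.1, hq.2.trans one_pos⟩

theorem le_pow_of_mem_Ioo (s : ℕ) : q ≤ q ^ s := by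
  rcases Nat.eq_zero_or_pos s with rfl | hs
  · simpa using hq.2.le.trans zero_le_one
  · have h : |q| ^ s ≤ |q| :=
      pow_le_of_le_one (abs_nonneg q) (abs_lt_one_of_mem_Ioo hq).le hs.ne'
    linarith [neg_abs_le (q ^ s), abs_pow q s, abs_of_neg hq.2]

theorem one_add_pow_pos (s : ℕ) : 0 < 1 + q ^ s := by
  linarith [le_pow_of_mem_Ioo hq s, hq.1]

theorem densityCoeff_nonpos (r : ℕ) : densityCoeff q r ≤ 0 := by
  rw [densityCoeff_eq, neg_nonpos]
  exact div_nonneg (mul_nonneg (pow_nonneg (neg_nonneg.mpr hq.2.le) r) (sq_nonneg _))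
    (mul_pos (one_add_pow_pos hq _) (one_add_pow_pos hq _)).le

theorem abs_densityCoeff_le (r : ℕ) : |densityCoeff q r| ≤ |q| ^ r := by
  have hpos := mul_pos (one_add_pow_pos hq (r + 2)) (one_add_pow_pos hq r)
  have hden : (1 + q) ^ 2 ≤ (1 + q ^ (r + 2)) * (1 + q ^ r) := by
    rw [sq]
    gcongr <;> linarith [le_pow_of_mem_Ioo hq (r + 2), le_pow_of_mem_Ioo hq r, hq.1]
  rw [densityCoeff_eq, abs_neg, abs_div, abs_mul, abs_pow, abs_neg, abs_sq, abs_of_pos hpos,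
    mul_div_assoc]
  exact mul_le_of_le_one_right (by positivity) ((div_le_one hpos).mpr hden)

theorem summable_densityCoeff : Summable (densityCoeff q) :=
  .of_norm_bounded (summable_geometric_of_lt_one (abs_nonneg q) (abs_lt_one_of_mem_Ioo hq))
    (abs_densityCoeff_le hq)

theorem summable_densityCoeff_mul {u : ℕ → ℝ} {C : ℝ} (hu : ∀ r, |u r| ≤ C) :
    Summable fun r => densityCoeff q r * u r :=
  .of_norm_bounded ((summable_densityCoeff hq).norm.mul_right C) fun r => by
    rw [norm_mul]
    exact mul_le_mul_of_nonneg_left (hu r) (norm_nonneg _)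

theorem two_mul_densityCoeff (r : ℕ) :
    2 * densityCoeff q r =
      (q + 1) / (q - 1) * ((-1) ^ (r + 1) * (powRatio q r - powRatio q (r + 2))) := by
  have := one_add_pow_pos hq r
  have := one_add_pow_pos hq (r + 2)
  have : q - 1 ≠ 0 := by linarith [hq.2]
  rw [densityCoeff, circCoeff, powRatio, powRatio, Nat.add_sub_cancel]
  field_simp
  ring

theorem hasSum_densityCoeff : HasSum (densityCoeff q) (-1 / 2) := by
  set H : ℕ → ℝ := fun r => (-1) ^ r * (powRatio q r - powRatio q (r + 1))
  have htel : ∀ r, densityCoeff q r = (q + 1) / (q - 1) / 2 * (H (r + 1) - H r) := fun r => by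
    linear_combination (1 / 2 : ℝ) * two_mul_densityCoeff hq r
  have hH : Tendsto H atTop (𝓝 0) := by
    have hg := tendsto_powRatio (abs_lt_one_of_mem_Ioo hq)
    rw [tendsto_zero_iff_norm_tendsto_zero]
    simpa [H] using (hg.sub (hg.comp (tendsto_add_atTop_nat 1))).norm
  have hH0 : (q + 1) / (q - 1) / 2 * (0 - H 0) = -1 / 2 := by
    have : 1 + q ≠ 0 := by linarith [hq.1]
    have : q - 1 ≠ 0 := by linarith [hq.2]
    simp only [H, powRatio, pow_zero, pow_one, zero_add, one_mul, sub_self, zero_div]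
    field_simp
    ring
  rw [(summable_densityCoeff hq).hasSum_iff_tendsto_nat, ← hH0]
  simp_rw [htel, ← mul_sum, sum_range_sub]
  exact (hH.sub tendsto_const_nhds).const_mul _

theorem circDensity_nonneg (t : ℝ) : 0 ≤ circDensity q t := by
  have hle : ∑' r, densityCoeff q r ≤ ∑' r, densityCoeff q r * cos (2 * (r + 1) * t) :=
    Summable.tsum_le_tsum
      (fun r => by simpa using mul_le_mul_of_nonpos_left (cos_le_one _) (densityCoeff_nonpos hq r))
      (summable_densityCoeff hq) (summable_densityCoeff_mul hq fun _ => abs_cos_le_one _)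
  rw [circDensity_eq]
  linarith [(hasSum_densityCoeff hq).tsum_eq]

theorem continuous_circDensity : Continuous (circDensity q) := by
  have : Continuous fun t => ∑' r, densityCoeff q r * cos (2 * (r + 1) * t) :=
    continuous_tsum (fun r => by fun_prop)
      ((summable_geometric_of_lt_one (abs_nonneg q) (abs_lt_one_of_mem_Ioo hq)))
      fun r t => by
        rw [norm_mul]
        exact (mul_le_of_le_one_right (abs_nonneg _) (abs_cos_le_one _)).trans
          (abs_densityCoeff_le hq r)
  exact continuous_const.add (continuous_const.mul this)

theorem integral_muQ {f : ℝ → ℝ} (hf : Measurable f) :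
    ∫ x, f x ∂muQ q =
      (2 * π)⁻¹ * ∫ t in (0 : ℝ)..2 * π, f (2 * cos t) * circDensity q t := by
  rw [muQ, integral_map (by fun_prop) hf.aestronglyMeasurable,
    integral_withDensity_eq_integral_toReal_smul
      (((continuous_circDensity hq).div_const _).measurable.ennreal_ofReal)
      (ae_of_all _ fun _ => ENNReal.ofReal_lt_top),
    intervalIntegral.integral_of_le (by positivity), ← integral_Icc_eq_integral_Ioc,
    ← integral_const_mul]
  refine setIntegral_congr_fun measurableSet_Icc fun t _ => ?_
  rw [ENNReal.toReal_ofReal (div_nonneg (circDensity_nonneg hq t) (by positivity)), smul_eq_mul]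
  ring

theorem integral_mul_circDensity {g : ℝ → ℝ} (hg : Continuous g) :
    ∫ t in (0 : ℝ)..2 * π, g t * circDensity q t =
      (∫ t in (0 : ℝ)..2 * π, g t) +
        2 * ∑' r, densityCoeff q r * ∫ t in (0 : ℝ)..2 * π, g t * cos (2 * (r + 1) * t) := by
  have hpt : ∀ t, g t * circDensity q t - g t =
      2 * ∑' r, densityCoeff q r * (g t * cos (2 * (r + 1) * t)) := fun t => by
    simp_rw [circDensity_eq, mul_left_comm _ (g t), tsum_mul_left]
    ring
  have hbound : ∀ (r : ℕ) t, |g t * cos (2 * (r + 1) * t)| ≤ |g t| := fun r t => by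
    rw [abs_mul]
    exact mul_le_of_le_one_right (abs_nonneg _) (abs_cos_le_one _)
  have hsum :
      HasSum (fun r => ∫ t in (0 : ℝ)..2 * π, densityCoeff q r * (g t * cos (2 * (r + 1) * t)))
        (∫ t in (0 : ℝ)..2 * π, ∑' r, densityCoeff q r * (g t * cos (2 * (r + 1) * t))) := by
    refine intervalIntegral.hasSum_integral_of_dominated_convergence (fun r t => |q| ^ r * |g t|)
      (fun r => (by fun_prop : Continuous _).aestronglyMeasurable)
      (fun r => ae_of_all _ fun t _ => ?_)
      (ae_of_all _ fun t _ =>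
        (summable_geometric_of_lt_one (abs_nonneg q) (abs_lt_one_of_mem_Ioo hq)).mul_right _)
      ?_ (ae_of_all _ fun t _ => (summable_densityCoeff_mul hq (hbound · t)).hasSum)
    · rw [norm_mul]
      exact mul_le_mul (abs_densityCoeff_le hq r) (hbound r t) (abs_nonneg _) (by positivity)
    · simp_rw [tsum_mul_right]
      exact (continuous_const.mul hg.abs).intervalIntegrable _ _
  rw [← sub_eq_iff_eq_add',
    ← intervalIntegral.integral_sub (f := fun t => g t * circDensity q t)
      ((hg.mul (continuous_circDensity hq)).intervalIntegrable _ _) (hg.intervalIntegrable _ _)]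
  simp_rw [hpt, intervalIntegral.integral_const_mul, ← hsum.tsum_eq,
    intervalIntegral.integral_const_mul]

theorem integral_pow_even_muQ (k : ℕ) :
    ∫ x, x ^ (2 * k) ∂muQ q =
      (2 * k).choose k +
        2 * ∑ r ∈ range k, densityCoeff q r * (2 * k).choose (k + (r + 1)) := by
  have h0 := integral_two_cos_pow_even_mul_cos k 0
  have hr : ∀ r : ℕ, ∫ t in (0 : ℝ)..2 * π, (2 * cos t) ^ (2 * k) * cos (2 * (r + 1) * t) =
      2 * π * (2 * k).choose (k + (r + 1)) := fun r => by
    exact_mod_cast integral_two_cos_pow_even_mul_cos k (r + 1)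
  simp only [CharP.cast_eq_zero, mul_zero, zero_mul, cos_zero, mul_one, add_zero] at h0
  rw [integral_muQ hq (continuous_pow _).measurable, integral_mul_circDensity hq (by fun_prop), h0]
  simp_rw [hr]
  rw [tsum_eq_sum (s := range k) fun r hr => by
    rw [Nat.choose_eq_zero_of_lt (by simp at hr; omega)]; simp]
  simp_rw [mul_left_comm (densityCoeff q _), ← mul_sum]
  field_simp

theorem integral_pow_odd_muQ (k : ℕ) : ∫ x, x ^ (2 * k + 1) ∂muQ q = 0 := by
  have h0 := integral_two_cos_pow_odd_mul_cos k 0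
  have hr : ∀ r : ℕ,
      ∫ t in (0 : ℝ)..2 * π, (2 * cos t) ^ (2 * k + 1) * cos (2 * (r + 1) * t) = 0 := fun r => by
    exact_mod_cast integral_two_cos_pow_odd_mul_cos k (r + 1)
  simp only [CharP.cast_eq_zero, mul_zero, zero_mul, cos_zero, mul_one] at h0
  rw [integral_muQ hq (continuous_pow _).measurable, integral_mul_circDensity hq (by fun_prop), h0]
  simp [hr]

theorem sum_evenMomentSummand (k : ℕ) :
    ∑ r ∈ Icc (-(k : ℤ) - 1) (k + 1), evenMomentSummand q k r =
      (k + 1) * ∑ s ∈ range (k + 1),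
        (-1) ^ (s + 1) * ((2 * k).choose (k + s) - (2 * k).choose (k + (s + 2)) : ℝ) *
          powRatio q (s + 1) := by
  have := sum_Icc_neg_self (evenMomentSummand q k) (k + 1)
  push_cast at this
  rw [show -(k : ℤ) - 1 = -(k + 1) by ring, this, mul_sum]
  rw [show evenMomentSummand q k 0 = 0 by simp [evenMomentSummand], zero_add]
  refine sum_congr rfl fun s hs => ?_
  have hsk : s ≤ k := Nat.lt_succ_iff.mp (mem_range.mp hs)
  rw [evenMomentSummand_add_neg hq.2.ne hsk (one_add_pow_pos hq _).ne', ← add_assoc k s 2]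
  linear_combination (-1) ^ (s + 1) * powRatio q (s + 1) * add_one_mul_choose_eq hsk

theorem choose_add_sum_densityCoeff_mul_choose_eq (k : ℕ) :
    (2 * k).choose k + 2 * ∑ r ∈ range k, densityCoeff q r * (2 * k).choose (k + (r + 1)) =
      (q + 1) / (q - 1) * (1 / (k + 1)) *
        ∑ r ∈ Icc (-(k : ℤ) - 1) (k + 1), evenMomentSummand q k r := by
  have hparts :=
    sum_range_by_parts_alternating (fun s => ((2 * k).choose (k + s) : ℝ)) (powRatio q) k
  have hvanish : ∀ j, (2 * k).choose (k + (k + 1 + j)) = 0 := fun j =>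
    Nat.choose_eq_zero_of_lt (by omega)
  have hg0 : powRatio q 0 = 0 := by simp [powRatio]
  simp only [hg0, hvanish 0, hvanish 1, Nat.cast_zero, mul_zero, zero_mul, sub_zero, zero_sub,
    add_zero] at hparts
  have hg1 : (q + 1) / (q - 1) * powRatio q 1 = -1 := by
    have : q - 1 ≠ 0 := by linarith [hq.2]
    have : 1 + q ≠ 0 := by linarith [hq.1]
    rw [powRatio, pow_one]
    field_simp
    ring
  have hterm : ∀ r, 2 * (densityCoeff q r * (2 * k).choose (k + (r + 1))) = (q + 1) / (q - 1) *
      ((-1) ^ (r + 1) * (2 * k).choose (k + (r + 1)) * (powRatio q r - powRatio q (r + 2))) :=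
    fun r => by rw [← mul_assoc, two_mul_densityCoeff hq]; ring
  rw [sum_evenMomentSummand hq, hparts, one_div, mul_assoc _ _⁻¹,
    inv_mul_cancel_left₀ (by positivity), mul_sum, sum_congr rfl fun r _ => hterm r, ← mul_sum]
  linear_combination ((2 * k).choose k : ℝ) * hg1

end

theorem stmt0 (q : ℝ) (hq : q ∈ Set.Ioo (-1 : ℝ) 0) :
    (∀ k : ℕ, ∫ x, x ^ (2 * k) ∂(muQ q) =
      (q + 1) / (q - 1) * (1 / (k + 1)) *
        ∑ r ∈ Finset.Icc (-(k : ℤ) - 1) ((k : ℤ) + 1),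
          (-1 : ℝ) ^ r * (Nat.choose (2 * k + 2) ((k : ℤ) + 1 + r).toNat : ℝ) *
            ((r : ℝ) / (1 + q ^ r)))
    ∧ (∀ k : ℕ, ∫ x, x ^ (2 * k + 1) ∂(muQ q) = 0) :=
  ⟨fun k => (integral_pow_even_muQ hq k).trans (choose_add_sum_densityCoeff_mul_choose_eq hq k),
    integral_pow_odd_muQ hq⟩
end

section
/- Let q ∈ (−1,0) and let z ∈ ℂ with |z| = 1. Then (1+q)/(1−q) · ( 1 − z² + 2(1 − z⁴) ∑_{k=1}^∞ (−1)^k q^k/(1 + q^k z²) ) = 1 + 2 ∑_{r=1}^∞ (−1)^r c_r(q) z^{2r}, where both series converge absolutely (for k ≥ 1 one has |q^k z²| < 1, so 1 + q^k z² ≠ 0). -/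
def lambertCoeff {𝕜 : Type*} [Field 𝕜] (q : 𝕜) (j : ℕ) : 𝕜 :=
  (-1) ^ (j + 1) * q ^ (j + 1) / (1 + q ^ (j + 1))

section LambertSeries

variable {𝕜 : Type*} [NormedField 𝕜] {q w : 𝕜}

theorem summable_lambert_double [CompleteSpace 𝕜] (hq : ‖q‖ < 1) (hw : ‖w‖ ≤ 1) :
    Summable fun p : ℕ × ℕ => (-1) ^ (p.1 + 1) * q ^ ((p.1 + 1) * (p.2 + 1)) * (-w) ^ p.2 := by
  have hq0 : 0 ≤ ‖q‖ := norm_nonneg q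
  refine Summable.of_norm_bounded (g := fun p : ℕ × ℕ => ‖q‖ ^ p.1 * ‖q‖ ^ p.2)
    ((summable_geometric_of_lt_one hq0 hq).mul_of_nonneg (summable_geometric_of_lt_one hq0 hq)
      (fun _ => pow_nonneg hq0 _) (fun _ => pow_nonneg hq0 _)) ?_
  rintro ⟨k, j⟩
  simp only [norm_mul, norm_pow, norm_neg, norm_one, one_pow, one_mul]
  calc ‖q‖ ^ ((k + 1) * (j + 1)) * ‖w‖ ^ j
      ≤ ‖q‖ ^ (k + j) * 1 :=
        mul_le_mul (pow_le_pow_of_le_one hq0 hq.le (by nlinarith))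
          (pow_le_one₀ (norm_nonneg w) hw) (by positivity) (by positivity)
    _ = ‖q‖ ^ k * ‖q‖ ^ j := by rw [mul_one, pow_add]

theorem hasSum_lambert_row (hq : ‖q‖ < 1) (hw : ‖w‖ ≤ 1) (k : ℕ) :
    HasSum (fun j => (-1) ^ (k + 1) * q ^ ((k + 1) * (j + 1)) * (-w) ^ j)
      ((-1) ^ (k + 1) * q ^ (k + 1) / (1 + q ^ (k + 1) * w)) := by
  have hratio : ‖-(q ^ (k + 1) * w)‖ < 1 := by
    rw [norm_neg, norm_mul, norm_pow]
    calc ‖q‖ ^ (k + 1) * ‖w‖ ≤ ‖q‖ ^ (k + 1) * 1 := by gcongr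
      _ < 1 := by rw [mul_one]; exact pow_lt_one₀ (norm_nonneg q) hq k.succ_ne_zero
  have h := (hasSum_geometric_of_norm_lt_one hratio).mul_left ((-1) ^ (k + 1) * q ^ (k + 1))
  rw [sub_neg_eq_add, ← div_eq_mul_inv] at h
  exact h.congr_fun fun j => by ring

theorem hasSum_lambert_column (hq : ‖q‖ < 1) (j : ℕ) :
    HasSum (fun k => (-1) ^ (k + 1) * q ^ ((k + 1) * (j + 1)) * (-w) ^ j)
      (lambertCoeff q j * w ^ j) := by
  have hratio : ‖-q ^ (j + 1)‖ < 1 := by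
    rw [norm_neg, norm_pow]; exact pow_lt_one₀ (norm_nonneg q) hq j.succ_ne_zero
  have h := (hasSum_geometric_of_norm_lt_one hratio).mul_right (-q ^ (j + 1) * (-w) ^ j)
  rw [sub_neg_eq_add, inv_mul_eq_div, show -q ^ (j + 1) * (-w) ^ j / (1 + q ^ (j + 1)) =
    lambertCoeff q j * w ^ j by rw [lambertCoeff]; ring] at h
  exact h.congr_fun fun k => by ring

theorem hasSum_lambertCoeff_mul_pow [CompleteSpace 𝕜] (hq : ‖q‖ < 1) (hw : ‖w‖ ≤ 1) :
    HasSum (fun j => lambertCoeff q j * w ^ j)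
      (∑' p : ℕ × ℕ, (-1) ^ (p.1 + 1) * q ^ ((p.1 + 1) * (p.2 + 1)) * (-w) ^ p.2) :=
  ((Equiv.prodComm ℕ ℕ).hasSum_iff.2 (summable_lambert_double hq hw).hasSum).prod_fiberwise
    fun j => hasSum_lambert_column hq j

theorem hasSum_lambert [CompleteSpace 𝕜] (hq : ‖q‖ < 1) (hw : ‖w‖ ≤ 1) :
    HasSum (fun k => (-1) ^ (k + 1) * q ^ (k + 1) / (1 + q ^ (k + 1) * w))
      (∑' j, lambertCoeff q j * w ^ j) := by
  rw [(hasSum_lambertCoeff_mul_pow hq hw).tsum_eq]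
  exact (summable_lambert_double hq hw).hasSum.prod_fiberwise (hasSum_lambert_row hq hw)

end LambertSeries

theorem HasSum.one_sub_sq_mul {R : Type*} [CommRing R] [TopologicalSpace R] [IsTopologicalRing R]
    {a : ℕ → R} {w s : R} (h : HasSum (fun j => a j * w ^ j) s) :
    HasSum (fun j => (a (j + 2) - a j) * w ^ (j + 2)) ((1 - w ^ 2) * s - a 0 - a 1 * w) := by
  have hshift := (hasSum_nat_add_iff' 2).2 h
  have hmul := h.mul_left (w ^ 2)
  rw [Finset.sum_range_succ, Finset.sum_range_one] at hshift
  have h' := (hshift.sub hmul).congr_fun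
    (g := fun j => (a (j + 2) - a j) * w ^ (j + 2)) fun j => by ring
  rwa [show s - (a 0 * w ^ 0 + a 1 * w ^ 1) - w ^ 2 * s = (1 - w ^ 2) * s - a 0 - a 1 * w by
    ring] at h'

theorem one_sub_abs_le_abs_one_add_pow {q : ℝ} (hq : |q| ≤ 1) (s : ℕ) :
    1 - |q| ≤ |1 + q ^ s| := by
  rcases s.eq_zero_or_pos with rfl | hs
  · norm_num; linarith [abs_nonneg q]
  · calc 1 - |q| ≤ 1 - |q| ^ s := by gcongr; exact pow_le_of_le_one (abs_nonneg q) hq hs.ne'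
      _ = |(1 : ℝ)| - |q ^ s| := by rw [abs_one, abs_pow]
      _ ≤ |1 + q ^ s| := abs_sub_abs_le_abs_add _ _

theorem one_add_pow_ne_zero {q : ℝ} (hq : |q| < 1) (s : ℕ) : 1 + q ^ s ≠ 0 := by
  intro h
  have := one_sub_abs_le_abs_one_add_pow hq.le s
  rw [h, abs_zero] at this
  linarith

theorem abs_circCoeff_succ_le {q : ℝ} (hq : |q| < 1) (r : ℕ) :
    |circCoeff q (r + 1)| ≤ (1 + q) ^ 2 / (1 - |q|) ^ 2 * |q| ^ r := by
  have hpos : 0 < 1 - |q| := by linarith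
  rw [circCoeff, Nat.add_sub_cancel, abs_div, abs_mul, abs_mul, abs_pow, abs_sq,
    div_mul_eq_mul_div, mul_comm _ (|q| ^ r), sq (1 - |q|)]
  gcongr
  · exact one_sub_abs_le_abs_one_add_pow hq.le _
  · exact one_sub_abs_le_abs_one_add_pow hq.le _

theorem summable_circCoeff_mul_pow {q : ℝ} (hq : |q| < 1) {w : ℂ} (hw : ‖w‖ ≤ 1) :
    Summable fun r : ℕ => (-1 : ℂ) ^ (r + 1) * (circCoeff q (r + 1) : ℂ) * w ^ (r + 1) := by
  refine Summable.of_norm_bounded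
    ((summable_geometric_of_lt_one (abs_nonneg q) hq).mul_left ((1 + q) ^ 2 / (1 - |q|) ^ 2))
    fun r => ?_
  simp only [norm_mul, norm_pow, norm_neg, norm_one, one_pow, one_mul, Complex.norm_real,
    Real.norm_eq_abs]
  calc |circCoeff q (r + 1)| * ‖w‖ ^ (r + 1) ≤ |circCoeff q (r + 1)| * 1 := by
        gcongr; exact pow_le_one₀ (norm_nonneg w) hw
    _ ≤ _ := by rw [mul_one]; exact abs_circCoeff_succ_le hq r

theorem one_add_mul_lambertCoeff_add_two_sub {q : ℝ} (hq : |q| < 1) (j : ℕ) :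
    (1 + q) * (lambertCoeff q (j + 2) - lambertCoeff q j) =
      (1 - q) * ((-1) ^ j * circCoeff q (j + 2)) := by
  have h₁ := one_add_pow_ne_zero hq (j + 1)
  have h₃ := one_add_pow_ne_zero hq (j + 3)
  simp only [lambertCoeff, circCoeff, show j + 2 - 1 = j + 1 by omega]
  field_simp
  ring

@[simp, norm_cast]
theorem Complex.ofReal_lambertCoeff (q : ℝ) (j : ℕ) :
    ((lambertCoeff q j : ℝ) : ℂ) = lambertCoeff (q : ℂ) j := by
  simp [lambertCoeff]

theorem one_add_mul_one_sub_sq_mul_tsum_lambertCoeff {q : ℝ} (hq : |q| < 1) {w : ℂ}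
    (hw : ‖w‖ ≤ 1) :
    (1 + (q : ℂ)) * ((1 - w ^ 2) * ∑' j, lambertCoeff (q : ℂ) j * w ^ j -
        lambertCoeff (q : ℂ) 0 - lambertCoeff (q : ℂ) 1 * w) =
      (1 - q) * (∑' r : ℕ, (-1 : ℂ) ^ (r + 1) * (circCoeff q (r + 1) : ℂ) * w ^ (r + 1) +
        circCoeff q 1 * w) := by
  have hqC : ‖(q : ℂ)‖ < 1 := by rwa [Complex.norm_real, Real.norm_eq_abs]
  have hT := (hasSum_lambertCoeff_mul_pow hqC hw).summable.hasSum.one_sub_sq_mul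
  have hU := (hasSum_nat_add_iff' 1).2 (summable_circCoeff_mul_pow hq hw).hasSum
  rw [Finset.sum_range_one, zero_add, pow_one, pow_one, neg_one_mul, neg_mul,
    sub_neg_eq_add] at hU
  refine (hT.mul_left _).unique ((hU.mul_left _).congr_fun fun j => ?_)
  have h := congrArg (fun x : ℝ => (x : ℂ)) (one_add_mul_lambertCoeff_add_two_sub hq j)
  push_cast at h
  rw [← mul_assoc, h]
  ring

theorem lambert_circCoeff_identity {q : ℝ} (hq : |q| < 1) {w : ℂ} (hw : ‖w‖ ≤ 1) :
    ((1 + (q : ℂ)) / (1 - (q : ℂ))) *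
        (1 - w + 2 * (1 - w ^ 2) *
          ∑' k : ℕ, (-1 : ℂ) ^ (k + 1) * (q : ℂ) ^ (k + 1) / (1 + (q : ℂ) ^ (k + 1) * w)) =
      1 + 2 * ∑' r : ℕ, (-1 : ℂ) ^ (r + 1) * (circCoeff q (r + 1) : ℂ) * w ^ (r + 1) := by
  have hrel := one_add_mul_one_sub_sq_mul_tsum_lambertCoeff hq hw
  rw [(hasSum_lambert (by rwa [Complex.norm_real, Real.norm_eq_abs]) hw).tsum_eq]
  have hq₁ : 1 - (q : ℂ) ≠ 0 := by
    exact_mod_cast sub_ne_zero.2 (by linarith [le_abs_self q] : (1 : ℝ) ≠ q)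
  have h₁ : 1 + (q : ℂ) ≠ 0 := by exact_mod_cast pow_one q ▸ one_add_pow_ne_zero hq 1
  have h₂ : 1 + (q : ℂ) ^ 2 ≠ 0 := by exact_mod_cast one_add_pow_ne_zero hq 2
  generalize ∑' j, lambertCoeff (q : ℂ) j * w ^ j = T at hrel ⊢
  generalize ∑' r : ℕ, (-1 : ℂ) ^ (r + 1) * (circCoeff q (r + 1) : ℂ) * w ^ (r + 1) = U at hrel ⊢
  simp only [lambertCoeff, circCoeff] at hrel
  push_cast at hrel
  field_simp at hrel
  rw [div_mul_eq_mul_div, div_eq_iff hq₁]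
  refine mul_left_cancel₀ h₂ ?_
  linear_combination hrel

theorem stmt2 (q : ℝ) (hq : q ∈ Set.Ioo (-1 : ℝ) 0) (z : ℂ) (hz : ‖z‖ = 1) :
    Summable (fun k : ℕ => (-1 : ℂ) ^ (k + 1) * (q : ℂ) ^ (k + 1) / (1 + (q : ℂ) ^ (k + 1) * z ^ 2)) ∧
    Summable (fun r : ℕ => (-1 : ℂ) ^ (r + 1) * (circCoeff q (r + 1) : ℂ) * z ^ (2 * (r + 1))) ∧
    ((1 + (q : ℂ)) / (1 - (q : ℂ))) *
        (1 - z ^ 2 + 2 * (1 - z ^ 4) *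
          ∑' k : ℕ, (-1 : ℂ) ^ (k + 1) * (q : ℂ) ^ (k + 1) / (1 + (q : ℂ) ^ (k + 1) * z ^ 2)) =
      1 + 2 * ∑' r : ℕ, (-1 : ℂ) ^ (r + 1) * (circCoeff q (r + 1) : ℂ) * z ^ (2 * (r + 1)) := by
  have hq' : |q| < 1 := abs_lt.2 ⟨hq.1, hq.2.trans one_pos⟩
  have hw : ‖z ^ 2‖ ≤ 1 := by rw [norm_pow, hz, one_pow]
  simp only [pow_mul, show z ^ 4 = (z ^ 2) ^ 2 by ring]
  exact ⟨(hasSum_lambert (by rwa [Complex.norm_real, Real.norm_eq_abs]) hw).summable,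
    summable_circCoeff_mul_pow hq' hw, lambert_circCoeff_identity hq' hw⟩
end

section
/- Let q ∈ (−1,0) and let z ∈ ℂ with |z| = 1 and z² ≠ −1. Then G_q(z) = (1+q)/(1−q) · ( 1 − z² + 2(1 − z⁴) ∑_{k=1}^∞ (−1)^k q^k/(1 + q^k z²) ), the series on the right converging absolutely. -/
/-!
With `g n = (-1)ⁿ qⁿ / (1 + qⁿ z²)`, the `k`-th summand of `G_q(z)` has the partial fraction
decomposition `(1 - q)⁻² (g(2k) + 2 g(2k+1) + g(2k+2))`, the signs of `g` absorbing the coefficients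
`1, -2, 1`. Regrouping it as `(g(2k) + g(2k+1)) + (g(2k+1) + g(2k+2))`, the sum over `k` becomes
`∑ g + ∑_{n ≥ 1} g = g 0 + 2 ∑_{n ≥ 1} g`, with `g 0 = 1 / (1 + z²)`. Everything converges
absolutely because `|1 + qⁿ z²| ≥ 1 - |q|` for `n ≥ 1`.
-/

/-- The function `G_q(z)` of Theorem 4.2:
`(1-q²)(1-z⁴) ∑_{k≥0} q^{2k}(1-q^{2k+1}z²) / ((1+q^{2k}z²)(1+q^{2k+1}z²)(1+q^{2k+2}z²))`. -/
noncomputable def Gfun (q : ℝ) (z : ℂ) : ℂ :=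
  (1 - (q : ℂ) ^ 2) * (1 - z ^ 4) *
    ∑' k : ℕ, (q : ℂ) ^ (2 * k) * (1 - (q : ℂ) ^ (2 * k + 1) * z ^ 2) /
      ((1 + (q : ℂ) ^ (2 * k) * z ^ 2) * (1 + (q : ℂ) ^ (2 * k + 1) * z ^ 2) *
        (1 + (q : ℂ) ^ (2 * k + 2) * z ^ 2))

noncomputable def altTerm (q w : ℂ) (n : ℕ) : ℂ := (-1) ^ n * q ^ n / (1 + q ^ n * w)

theorem tsum_even_add_two_mul_odd_add_even_succ {R : Type*} [Ring R] [UniformSpace R]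
    [IsUniformAddGroup R] [CompleteSpace R] [T2Space R] {g : ℕ → R} (hg : Summable g) :
    ∑' k, (g (2 * k) + 2 * g (2 * k + 1) + g (2 * k + 2)) = ∑' n, g n + ∑' n, g (n + 1) := by
  have he : Summable fun k ↦ g (2 * k) := hg.comp_injective fun a b h ↦ by omega
  have ho : Summable fun k ↦ g (2 * k + 1) := hg.comp_injective fun a b h ↦ by simp at h; omega
  have he' : Summable fun k ↦ g (2 * k + 2) := hg.comp_injective fun a b h ↦ by simp at h; omega
  calc ∑' k, (g (2 * k) + 2 * g (2 * k + 1) + g (2 * k + 2))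
      = ∑' k, ((g (2 * k) + g (2 * k + 1)) + (g (2 * k + 1) + g (2 * k + 2))) :=
        tsum_congr fun k ↦ by rw [two_mul (g _)]; abel
    _ = (∑' k, g (2 * k) + ∑' k, g (2 * k + 1)) + (∑' k, g (2 * k + 1) + ∑' k, g (2 * k + 2)) := by
        rw [(he.add ho).tsum_add (ho.add he'), he.tsum_add ho, ho.tsum_add he']
    _ = ∑' n, g n + ∑' n, g (n + 1) :=
        congrArg₂ (· + ·) (tsum_even_add_odd he ho) (tsum_even_add_odd (f := fun n ↦ g (n + 1)) ho he')

section

variable {q w : ℂ}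

theorem one_sub_norm_le_norm_one_add_pow_succ_mul (hq : ‖q‖ < 1) (hw : ‖w‖ ≤ 1) (n : ℕ) :
    1 - ‖q‖ ≤ ‖1 + q ^ (n + 1) * w‖ := by
  have hsmall : ‖q ^ (n + 1) * w‖ ≤ ‖q‖ := calc
    ‖q ^ (n + 1) * w‖ = ‖q‖ ^ n * ‖q‖ * ‖w‖ := by rw [norm_mul, norm_pow, pow_succ]
    _ ≤ 1 * ‖q‖ * 1 := by gcongr; exact pow_le_one₀ (norm_nonneg q) hq.le
    _ = ‖q‖ := by ring
  have := norm_sub_norm_le (1 : ℂ) (-(q ^ (n + 1) * w))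
  rw [sub_neg_eq_add, norm_neg, norm_one] at this
  linarith

theorem one_add_pow_mul_ne_zero (hq : ‖q‖ < 1) (hw : ‖w‖ ≤ 1) (hw₁ : w ≠ -1) (n : ℕ) :
    1 + q ^ n * w ≠ 0 := by
  cases n with
  | zero => exact fun h ↦ hw₁ (by linear_combination h)
  | succ n =>
    exact norm_pos_iff.mp <|
      (sub_pos.mpr hq).trans_le (one_sub_norm_le_norm_one_add_pow_succ_mul hq hw n)

theorem norm_altTerm_succ_le (hq : ‖q‖ < 1) (hw : ‖w‖ ≤ 1) (n : ℕ) :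
    ‖altTerm q w (n + 1)‖ ≤ ‖q‖ / (1 - ‖q‖) * ‖q‖ ^ n := calc
  ‖altTerm q w (n + 1)‖ = ‖q‖ ^ (n + 1) / ‖1 + q ^ (n + 1) * w‖ := by simp [altTerm]
  _ ≤ ‖q‖ ^ (n + 1) / (1 - ‖q‖) := div_le_div_of_nonneg_left (by positivity) (sub_pos.mpr hq)
      (one_sub_norm_le_norm_one_add_pow_succ_mul hq hw n)
  _ = ‖q‖ / (1 - ‖q‖) * ‖q‖ ^ n := by ring

theorem summable_altTerm (hq : ‖q‖ < 1) (hw : ‖w‖ ≤ 1) : Summable (altTerm q w) :=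
  (summable_nat_add_iff 1).mp <|
    ((summable_geometric_of_lt_one (norm_nonneg q) hq).mul_left _).of_norm_bounded
      (norm_altTerm_succ_le hq hw)

theorem summand_eq_altTerm (hq₁ : q ≠ 1) (hden : ∀ n, 1 + q ^ n * w ≠ 0) (k : ℕ) :
    q ^ (2 * k) * (1 - q ^ (2 * k + 1) * w) /
        ((1 + q ^ (2 * k) * w) * (1 + q ^ (2 * k + 1) * w) * (1 + q ^ (2 * k + 2) * w)) =
      ((1 - q) ^ 2)⁻¹ *
        (altTerm q w (2 * k) + 2 * altTerm q w (2 * k + 1) + altTerm q w (2 * k + 2)) := by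
  have h₀ := hden (2 * k)
  have h₁ := hden (2 * k + 1)
  have h₂ := hden (2 * k + 2)
  have hq : 1 - q ≠ 0 := sub_ne_zero.mpr hq₁.symm
  simp only [altTerm, pow_succ _ (2 * k), pow_add _ (2 * k), pow_mul, neg_one_sq, one_pow]
    at h₀ h₁ h₂ ⊢
  generalize (q ^ 2) ^ k = a at h₀ h₁ h₂ ⊢
  field_simp
  ring

end

theorem stmt3 (q : ℝ) (hq : q ∈ Set.Ioo (-1 : ℝ) 0) (z : ℂ) (hz : ‖z‖ = 1)
    (hz2 : z ^ 2 ≠ -1) :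
    Summable (fun k : ℕ => (-1 : ℂ) ^ (k + 1) * (q : ℂ) ^ (k + 1) / (1 + (q : ℂ) ^ (k + 1) * z ^ 2)) ∧
    Gfun q z = ((1 + (q : ℂ)) / (1 - (q : ℂ))) *
      (1 - z ^ 2 + 2 * (1 - z ^ 4) *
        ∑' k : ℕ, (-1 : ℂ) ^ (k + 1) * (q : ℂ) ^ (k + 1) / (1 + (q : ℂ) ^ (k + 1) * z ^ 2)) := by
  have hq' : ‖(q : ℂ)‖ < 1 := by
    rw [Complex.norm_real, Real.norm_eq_abs, abs_lt]
    exact ⟨hq.1, hq.2.trans one_pos⟩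
  have hq₁ : (q : ℂ) ≠ 1 := by exact_mod_cast (hq.2.trans one_pos).ne
  have hw : ‖z ^ 2‖ ≤ 1 := by rw [norm_pow, hz, one_pow]
  have hden := one_add_pow_mul_ne_zero hq' hw hz2
  have hg := summable_altTerm hq' hw
  have hg₀ : altTerm q (z ^ 2) 0 = 1 / (1 + z ^ 2) := by simp [altTerm]
  refine ⟨(summable_nat_add_iff 1).mpr hg, ?_⟩
  change _ = _ * (_ + _ * ∑' n, altTerm q (z ^ 2) (n + 1))
  rw [Gfun, tsum_congr (summand_eq_altTerm hq₁ hden), tsum_mul_left,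
    tsum_even_add_two_mul_odd_add_even_succ hg, hg.tsum_eq_zero_add, hg₀]
  have hz2' : 1 + z ^ 2 ≠ 0 := by simpa using hden 0
  field_simp
  ring
end

section
/- For all integers k ≥ 1 and n ≥ 2, the symmetric real matrix ( n^{l(p,p′)} )_{p,p′ ∈ NC₂(2k)} is positive definite; in particular it is invertible. -/
/-- Noncrossing pair partitions of `{1,…,m}`, encoded as fixed-point-free involutions of
`Fin m` with no crossing `a < b < c < d`, `p a = c`, `p b = d`. -/
def NC2 (m : ℕ) : Set (Equiv.Perm (Fin m)) :=
  {p | (∀ i, p i ≠ i) ∧ p * p = 1 ∧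
    ∀ a b c d : Fin m, a < b → b < c → c < d → p a = c → p b ≠ d}

noncomputable instance (m : ℕ) : Fintype (NC2 m) := Fintype.ofFinite _

/-- `loops p p'`: the number of orbits on `{1,…,m}` of the subgroup generated by `p` and `p'`,
i.e. the number of loops obtained by gluing the diagrams `p` and `p'`. -/
noncomputable def loops {m : ℕ} (p p' : Equiv.Perm (Fin m)) : ℕ :=
  Nat.card (MulAction.orbitRel.Quotient (Subgroup.closure {p, p'}) (Fin m))

/-- The Gram matrix `G_{kn}(p,p') = n^{l(p,p')}` indexed by noncrossing pair partitions. -/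
noncomputable def gramNC (k n : ℕ) : Matrix (NC2 (2 * k)) (NC2 (2 * k)) ℝ :=
  fun p p' => (n : ℝ) ^ loops (p : Equiv.Perm (Fin (2 * k))) (p' : Equiv.Perm (Fin (2 * k)))

/-!
Colourings `Fin (2k) → Fin n` constant on the blocks of both `p` and `p'` are the colourings of
the loops of `(p, p')`, so `G = V Vᵀ` with `V p i = 1` if `i` is constant on the blocks of `p`
and `0` otherwise, and it suffices that the rows of `V` are linearly independent. For each `p`
there is a two-colouring `i_p` constant on the blocks of `p` such that every other noncrossing
`q` with monochromatic blocks under `i_p` has a Dyck path lying weakly above, and not equal to,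
the one of `p`; so the columns `i_p` of `V` form a matrix triangular with respect to the area
under the path.
-/

open Equiv Function Finset Matrix

section Colourings

variable {α β : Type*}

lemma apply_eq_of_mem_closure {s : Set (Perm α)} {i : α → β} (h : ∀ g ∈ s, ∀ a, i (g a) = i a)
    {g : Perm α} (hg : g ∈ Subgroup.closure s) (a : α) : i (g a) = i a := by
  induction hg using Subgroup.closure_induction generalizing a with
  | mem g hg => exact h g hg a
  | one => rfl
  | mul g g' _ _ ihg ihg' => exact (ihg (g' a)).trans (ihg' a)
  | inv g _ ih => simpa using (ih (g⁻¹ a)).symm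

lemma orbitRel_closure_le_ker_iff {s : Set (Perm α)} {i : α → β} :
    MulAction.orbitRel (Subgroup.closure s) α ≤ Setoid.ker i ↔ ∀ g ∈ s, ∀ a, i (g a) = i a :=
  ⟨fun h g hg _ => h ⟨⟨g, Subgroup.subset_closure hg⟩, rfl⟩,
    fun h _ b ⟨⟨_, hg⟩, hgb⟩ => hgb ▸ apply_eq_of_mem_closure h hg b⟩

def invariantColouringsEquiv (s : Set (Perm α)) :
    {i : α → β // ∀ g ∈ s, ∀ a, i (g a) = i a} ≃
      (MulAction.orbitRel.Quotient (Subgroup.closure s) α → β) :=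
  (Equiv.subtypeEquivRight fun _ => orbitRel_closure_le_ker_iff.symm).trans (Setoid.liftEquiv _)

lemma card_invariantColourings [Finite α] (s : Set (Perm α)) :
    Nat.card {i : α → β // ∀ g ∈ s, ∀ a, i (g a) = i a} =
      Nat.card β ^ Nat.card (MulAction.orbitRel.Quotient (Subgroup.closure s) α) := by
  rw [Nat.card_congr (invariantColouringsEquiv s), Nat.card_fun]

end Colourings

section Gram

variable {m n : ℕ}

def colouringMatrix (n : ℕ) (S : Set (Perm (Fin m))) : Matrix S (Fin m → Fin n) ℝ :=
  fun p i => if ∀ a, i (p.1 a) = i a then 1 else 0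

lemma mul_conjTranspose_colouringMatrix_apply (S : Set (Perm (Fin m))) (p q : S) :
    (colouringMatrix n S * (colouringMatrix n S)ᴴ) p q = (n : ℝ) ^ loops p.1 q.1 := by
  simp only [mul_apply, conjTranspose_apply, star_trivial, colouringMatrix, ite_zero_mul_ite_zero,
    mul_one, sum_boole]
  have h := card_invariantColourings (β := Fin n) ({p.1, q.1} : Set (Perm (Fin m)))
  rw [Nat.card_fin, Nat.card_eq_fintype_card, Fintype.card_subtype] at h
  rw [loops, ← Nat.cast_pow, ← h]
  simp

end Gram

lemma Matrix.vecMul_injective_of_triangular {ι κ γ R : Type*} [Fintype ι] [LinearOrder γ]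
    [Ring R] [NoZeroDivisors R] (A : Matrix ι κ R) (t : ι → κ) (b : ι → γ)
    (hdiag : ∀ i, A i (t i) ≠ 0) (htri : ∀ i j, j ≠ i → A j (t i) ≠ 0 → b i < b j) :
    Function.Injective A.vecMul := by
  suffices h : ∀ x, x ᵥ* A = 0 → x = 0 from
    fun x y hxy => sub_eq_zero.1 (h _ (by rw [sub_vecMul]; exact sub_eq_zero.2 hxy))
  classical
  intro x hx
  by_contra hne
  obtain ⟨i, hi, hmax⟩ := exists_max_image {j | x j ≠ 0} b
    (by simpa [Finset.Nonempty, funext_iff] using hne)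
  rw [mem_filter_univ] at hi
  have hxi : (x ᵥ* A) (t i) = x i * A i (t i) := by
    refine sum_eq_single i (fun j _ hji => ?_) (by simp)
    by_contra h
    have hj := hmax j (by simpa using left_ne_zero_of_mul h)
    exact (htri i j hji (right_ne_zero_of_mul h)).not_ge hj
  rw [hx, Pi.zero_apply, eq_comm] at hxi
  exact mul_ne_zero hi (hdiag i) hxi

namespace Equiv.Perm

variable {m : ℕ} {p q : Perm (Fin m)}

def arcSign (p : Perm (Fin m)) (x : Fin m) : ℤ := if x < p x then 1 else -1

def dyckHeight (p : Perm (Fin m)) (j : ℕ) : ℤ := ∑ x with x.val < j, p.arcSign x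

def dyckArea (p : Perm (Fin m)) : ℤ := ∑ j ∈ range (m + 1), p.dyckHeight j

lemma arcSign_le_one (x : Fin m) : p.arcSign x ≤ 1 := by
  unfold arcSign; split <;> simp

lemma arcSign_apply_of_involutive (hp : Involutive p) (hp0 : ∀ x, p x ≠ x) (x : Fin m) :
    p.arcSign (p x) = -p.arcSign x := by
  unfold arcSign
  rw [hp x]
  rcases (hp0 x).lt_or_gt with h | h <;> simp [h, h.not_gt]

lemma dyckHeight_succ (x : Fin m) :
    p.dyckHeight (x.val + 1) = p.dyckHeight x.val + p.arcSign x := by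
  have : univ.filter (fun y : Fin m => y.val < x.val + 1) =
      insert x (univ.filter fun y : Fin m => y.val < x.val) := by
    ext y; simp [le_iff_eq_or_lt, Fin.val_inj]
  rw [dyckHeight, this, sum_insert (by simp), add_comm]
  rfl

lemma dyckHeight_eq_sum_spanning (hq : Involutive q) (hpq : ∀ x, p.arcSign (q x) = -p.arcSign x)
    (j : ℕ) : p.dyckHeight j = ∑ x with x.val < j ∧ j ≤ (q x).val, p.arcSign x := by
  have hinner : ∑ x with x.val < j ∧ (q x).val < j, p.arcSign x = 0 := by
    refine sum_involution (fun x _ => q x) (fun x _ => by rw [hpq]; ring)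
      (fun x _ hx hqx => hx (by linarith [hqx ▸ hpq x])) (fun x hx => ?_) (fun x _ => hq x)
    simp only [mem_filter_univ] at hx ⊢
    exact ⟨hx.2, (hq x).symm ▸ hx.1⟩
  rw [dyckHeight, ← sum_filter_add_sum_filter_not _ (fun x => (q x).val < j), filter_filter,
    filter_filter, hinner, zero_add]
  simp only [not_lt]

lemma dyckHeight_le (hq : Involutive q) (hq0 : ∀ x, q x ≠ x)
    (hpq : ∀ x, p.arcSign (q x) = -p.arcSign x) (j : ℕ) : p.dyckHeight j ≤ q.dyckHeight j := by
  rw [dyckHeight_eq_sum_spanning hq hpq, dyckHeight_eq_sum_spanning hq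
    (arcSign_apply_of_involutive hq hq0)]
  refine sum_le_sum fun x hx => ?_
  have hxq : x < q x := by simp only [mem_filter_univ] at hx; exact Fin.lt_def.2 (by omega)
  simpa [arcSign, hxq] using arcSign_le_one x

lemma arcSign_eq_of_dyckArea_eq (hq : Involutive q) (hq0 : ∀ x, q x ≠ x)
    (hpq : ∀ x, p.arcSign (q x) = -p.arcSign x) (harea : p.dyckArea = q.dyckArea) :
    p.arcSign = q.arcSign := by
  have hheight : ∀ j ∈ range (m + 1), p.dyckHeight j = q.dyckHeight j :=
    (sum_eq_sum_iff_of_le fun j _ => dyckHeight_le hq hq0 hpq j).1 harea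
  funext x
  have h1 := hheight x (mem_range.2 (by omega))
  have h2 := hheight (x.val + 1) (by simp)
  rw [dyckHeight_succ, dyckHeight_succ] at h2
  linarith

end Equiv.Perm

lemma Finset.even_card_of_involutive {α : Type*} {f : α → α} (hf : Involutive f)
    (hf0 : ∀ x, f x ≠ x) {s : Finset α} (hs : ∀ x ∈ s, f x ∈ s) : Even #s := by
  have h : ∑ _x ∈ s, (1 : ZMod 2) = 0 :=
    sum_involution (fun x _ => f x) (fun _ _ => by decide) (fun x _ _ => hf0 x) hs
      (fun x _ => hf x)
  rwa [sum_const, nsmul_one, ZMod.natCast_eq_zero_iff_even] at h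

namespace NC2

variable {m : ℕ} {p q : Perm (Fin m)}

lemma involutive (hp : p ∈ NC2 m) : Involutive p := fun x => by
  simpa using congr($(hp.2.1) x)

lemma apply_mem_Ioo (hp : p ∈ NC2 m) {a x : Fin m} (hax : a < x) (hxa : x < p a) :
    a < p x ∧ p x < p a := by
  have hne_a : p x ≠ a := fun h => hxa.ne (by rw [← h, involutive hp])
  have hne_pa : p x ≠ p a := fun h => hax.ne' (p.injective h)
  refine ⟨lt_of_le_of_ne (not_lt.1 fun h => ?_) hne_a.symm,
    lt_of_le_of_ne (not_lt.1 fun h => ?_) hne_pa⟩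
  · exact hp.2.2 _ _ _ _ h hax hxa (involutive hp x) rfl
  · exact hp.2.2 _ _ _ _ hax hxa h rfl rfl

lemma even_apply_iff (hp : p ∈ NC2 m) (a : Fin m) : Even (p a).val ↔ ¬Even a.val := by
  wlog ha : a < p a generalizing a
  · have hpa : p a < p (p a) := by
      rw [involutive hp]; exact lt_of_le_of_ne (not_lt.1 ha) (hp.1 a)
    have := this (p a) hpa
    rw [involutive hp] at this
    tauto
  have heven : Even #(Ioo a (p a)) := even_card_of_involutive (involutive hp) hp.1 fun x hx => by
    rw [mem_Ioo] at hx ⊢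
    exact apply_mem_Ioo hp hx.1 hx.2
  rw [Fin.card_Ioo] at heven
  have := Fin.lt_def.1 ha
  obtain ⟨r, hr⟩ := heven
  rw [Nat.even_iff, Nat.even_iff]
  omega

lemma apply_le_apply (hp : p ∈ NC2 m) (hq : q ∈ NC2 m) (hop : ∀ x, x < p x ↔ x < q x)
    {a : Fin m} (ha : a < p a) : q a ≤ p a := by
  by_contra! hlt
  set I := Ioc a (p a)
  -- `p` maps the left ends in `I` injectively to the right ends other than `p a`, while `q` maps
  -- the right ends in `I` injectively to left ends in `I`.
  have hopen : #(I.filter fun x => x < p x) + 1 ≤ #(I.filter fun x => p x < x) := by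
    have hpa : p a ∈ I.filter fun x => p x < x := by
      simp [I, ha, involutive hp a]
    rw [← card_erase_add_one hpa, add_le_add_iff_right]
    refine card_le_card_of_injOn p (fun x hx => ?_) p.injective.injOn
    simp only [mem_coe, mem_filter, mem_erase, mem_Ioc, I] at hx ⊢
    have hxpa : x < p a := lt_of_le_of_ne hx.1.2 fun h => by
      have := hx.2; rw [h, involutive hp] at this; exact ha.not_gt this
    have := apply_mem_Ioo hp hx.1.1 hxpa
    refine ⟨fun h => hx.1.1.ne' (p.injective h), ⟨this.1, this.2.le⟩, ?_⟩
    rw [involutive hp]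
    exact hx.2
  have hclose : #(I.filter fun x => p x < x) ≤ #(I.filter fun x => x < p x) := by
    refine card_le_card_of_injOn q (fun x hx => ?_) q.injective.injOn
    simp only [mem_coe, mem_filter, mem_Ioc, I] at hx ⊢
    have hqx : q x < x :=
      lt_of_le_of_ne (not_lt.1 fun h => hx.2.not_gt ((hop x).2 h)) (hq.1 x)
    have := apply_mem_Ioo hq hx.1.1 (hx.1.2.trans_lt hlt)
    exact ⟨⟨this.1, hqx.le.trans hx.1.2⟩, by rw [hop, involutive hq]; exact hqx⟩
  omega

lemma eq_of_arcSign_eq (hp : p ∈ NC2 m) (hq : q ∈ NC2 m) (h : p.arcSign = q.arcSign) : p = q := by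
  have hop : ∀ x, x < p x ↔ x < q x := fun x => by
    have := congr_fun h x
    by_cases h1 : x < p x <;> by_cases h2 : x < q x <;> simp [Perm.arcSign, h1, h2] at this ⊢
  have hopener : ∀ a, a < p a → p a = q a := fun a ha =>
    le_antisymm (apply_le_apply hq hp (fun x => (hop x).symm) ((hop a).1 ha))
      (apply_le_apply hp hq hop ha)
  refine Equiv.ext fun x => (hp.1 x).lt_or_gt.elim (fun hx => ?_) (hopener x)
  have h := hopener (p x) (by rwa [involutive hp])
  rw [involutive hp] at h
  calc p x = q (q (p x)) := (involutive hq _).symm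
    _ = q x := by rw [← h]

lemma dyckArea_lt (hp : p ∈ NC2 m) (hq : q ∈ NC2 m) (hpq : ∀ x, p.arcSign (q x) = -p.arcSign x)
    (hne : p ≠ q) : p.dyckArea < q.dyckArea :=
  lt_of_le_of_ne (sum_le_sum fun j _ => Perm.dyckHeight_le (involutive hq) hq.1 hpq j)
    fun h => hne <| eq_of_arcSign_eq hp hq <|
      Perm.arcSign_eq_of_dyckArea_eq (involutive hq) hq.1 hpq h

end NC2

section TestColouring

variable {m n : ℕ} {p q : Perm (Fin m)}

/-- Since the blocks of a noncrossing `q` join positions of opposite parity, such a block is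
monochromatic iff it joins a left end and a right end of blocks of `p`. -/
def testColouring (hn : 2 ≤ n) (p : Perm (Fin m)) (a : Fin m) : Fin n :=
  Fin.castLE hn (if Even a.val ↔ a < p a then 0 else 1)

lemma testColouring_apply_eq_iff (hn : 2 ≤ n) (hq : q ∈ NC2 m) (a : Fin m) :
    testColouring hn p (q a) = testColouring hn p a ↔ p.arcSign (q a) = -p.arcSign a := by
  rw [testColouring, testColouring, (Fin.castLE_injective hn).eq_iff]
  simp only [Perm.arcSign, NC2.even_apply_iff hq]
  by_cases ha : Even a.val <;> by_cases h1 : a < p a <;> by_cases h2 : q a < p (q a) <;>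
    simp [ha, h1, h2]

lemma colouringMatrix_testColouring_ne_zero_iff (hn : 2 ≤ n) (S : Set (Perm (Fin m))) (q : S)
    (hq : q.1 ∈ NC2 m) :
    colouringMatrix n S q (testColouring hn p) ≠ 0 ↔ ∀ a, p.arcSign (q.1 a) = -p.arcSign a := by
  simp only [colouringMatrix, ne_eq, ite_eq_right_iff, one_ne_zero, imp_false, not_not,
    testColouring_apply_eq_iff hn hq]

end TestColouring

theorem stmt9_general (k n : ℕ) (hn : 2 ≤ n) :
    (gramNC k n).PosDef ∧ IsUnit (gramNC k n).det := by
  have hgram : gramNC k n = colouringMatrix n (NC2 (2 * k)) * (colouringMatrix n (NC2 (2 * k)))ᴴ := by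
    ext p q
    exact (mul_conjTranspose_colouringMatrix_apply _ p q).symm
  have hinj : Function.Injective (colouringMatrix n (NC2 (2 * k))).vecMul := by
    refine vecMul_injective_of_triangular _ (fun p => testColouring hn p.1) (fun p => p.1.dyckArea)
      (fun p => ?_) (fun p q hqp hpq => ?_)
    · exact (colouringMatrix_testColouring_ne_zero_iff hn _ p p.2).2
        (Perm.arcSign_apply_of_involutive (NC2.involutive p.2) p.2.1)
    · exact NC2.dyckArea_lt p.2 q.2 ((colouringMatrix_testColouring_ne_zero_iff hn _ q q.2).1 hpq)
        (Subtype.coe_injective.ne hqp.symm)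
  have hpos : (gramNC k n).PosDef := hgram ▸ PosDef.mul_conjTranspose_self _ hinj
  exact ⟨hpos, isUnit_iff_ne_zero.2 hpos.det_pos.ne'⟩

theorem stmt9 (k n : ℕ) (hk : 1 ≤ k) (hn : 2 ≤ n) :
    (gramNC k n).PosDef ∧ IsUnit (gramNC k n).det :=
  stmt9_general k n hn
end

section
/- Let A be a unital C*-algebra and let q ∈ [−1,0). Let G ∈ M₂(A) be the matrix with first row (0, −q·1) and second row (1, 0); G is invertible with G⁻¹ having first row (0, 1) and second row (−q⁻¹·1, 0). For u ∈ M₂(A), write ū for the matrix of entrywise adjoints and u* for the conjugate transpose. Then the following are equivalent: (i) u*u = uu* = 1 and u = G ū G⁻¹; (ii) there exist α, γ ∈ A such that u has first row (α, −qγ*) and second row (γ, α*), and the relations αγ = qγα, αγ* = qγ*α, γγ* = γ*γ, α*α + γ*γ = 1, and αα* + q²γγ* = 1 hold. -/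
/-! Unwinding `u = G ū G⁻¹` entrywise forces `u = [[α, -qγ*], [γ, α*]]` with `α = u₀₀`,
`γ = u₁₀`. For a matrix of this shape the off-diagonal entries of `u*u = 1` and `uu* = 1` come in
adjoint pairs, giving the two commutation relations, and normality of `γ` is the difference of the
diagonal identities `α*α + γ*γ = 1 = γγ* + α*α`. -/

open scoped Matrix

namespace Matrix

variable {α : Type*}

theorem conjTranspose_fin_two [Star α] (a b c d : α) :
    !![a, b; c, d]ᴴ = !![star a, star c; star b, star d] := by
  ext i j
  fin_cases i <;> fin_cases j <;> rfl

theorem map_fin_two {β : Type*} (f : α → β) (a b c d : α) :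
    !![a, b; c, d].map f = !![f a, f b; f c, f d] := by
  ext i j
  fin_cases i <;> fin_cases j <;> rfl

end Matrix

section Twist

variable {R A : Type*} [Field R] [Ring A] [Algebra R A]

def twistMatrix (r : R) : Matrix (Fin 2) (Fin 2) A :=
  !![0, algebraMap R A (-r); 1, 0]

def twistMatrixInv (r : R) : Matrix (Fin 2) (Fin 2) A :=
  !![0, 1; algebraMap R A (-r⁻¹), 0]

variable {r : R}

theorem twistMatrix_mul_twistMatrixInv (hr : r ≠ 0) :
    twistMatrix r * twistMatrixInv r = (1 : Matrix (Fin 2) (Fin 2) A) := by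
  rw [twistMatrix, twistMatrixInv, Matrix.mul_fin_two, Matrix.one_fin_two]
  simp [← map_mul, hr]

theorem twistMatrixInv_mul_twistMatrix (hr : r ≠ 0) :
    twistMatrixInv r * twistMatrix r = (1 : Matrix (Fin 2) (Fin 2) A) := by
  rw [twistMatrix, twistMatrixInv, Matrix.mul_fin_two, Matrix.one_fin_two]
  simp [← map_mul, hr]

end Twist

def suqMatrix {R A : Type*} [CommRing R] [Ring A] [Algebra R A] [Star A] (r : R) (α γ : A) :
    Matrix (Fin 2) (Fin 2) A :=
  !![α, algebraMap R A (-r) * star γ; γ, star α]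

section SUq

variable {R A : Type*} [Field R] [StarRing R] [Ring A] [StarRing A] [Algebra R A] [StarModule R A]
  {r : R}

theorem eq_twistMatrix_mul_map_star_mul_twistMatrixInv_iff (hr₀ : r ≠ 0) (hr : IsSelfAdjoint r)
    (u : Matrix (Fin 2) (Fin 2) A) :
    u = twistMatrix r * u.map star * twistMatrixInv r ↔ ∃ α γ : A, u = suqMatrix r α γ := by
  obtain ⟨a, b, c, d, rfl⟩ : ∃ a b c d : A, u = !![a, b; c, d] := ⟨_, _, _, _, u.eta_fin_two⟩
  simp only [suqMatrix, twistMatrix, twistMatrixInv, Matrix.map_fin_two, Matrix.mul_fin_two,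
    EmbeddingLike.apply_eq_iff_eq, Matrix.vecCons_inj, and_true, ← Algebra.commutes,
    ← Algebra.smul_def, zero_mul, one_mul, mul_one, mul_zero, zero_add, add_zero, smul_smul,
    neg_mul_neg, inv_mul_cancel₀ hr₀, one_smul]
  constructor
  · rintro ⟨⟨-, hb⟩, -, hd⟩
    exact ⟨a, c, ⟨rfl, hb⟩, rfl, hd⟩
  · rintro ⟨α, γ, ⟨rfl, rfl⟩, rfl, rfl⟩
    simp [star_smul, hr.star_eq, smul_smul, hr₀]

theorem suqMatrix_conjTranspose_mul_self_eq_one_iff (hr : IsSelfAdjoint r) (α γ : A) :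
    (suqMatrix r α γ)ᴴ * suqMatrix r α γ = 1 ↔
      star α * α + star γ * γ = 1 ∧ α * γ = algebraMap R A r * (γ * α) ∧
        α * star α + algebraMap R A (r ^ 2) * (γ * star γ) = 1 := by
  have star_rel : r • (star α * star γ) = star γ * star α ↔ r • (γ * α) = α * γ := by
    rw [← star_inj]
    simp [star_smul, hr.star_eq]
  simp only [suqMatrix, ← Algebra.smul_def, Matrix.conjTranspose_fin_two, Matrix.mul_fin_two,
    Matrix.one_fin_two, EmbeddingLike.apply_eq_iff_eq, Matrix.vecCons_inj, and_true, star_smul,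
    star_star, star_neg, hr.star_eq, smul_mul_assoc, mul_smul_comm, neg_smul, smul_neg, mul_neg,
    neg_mul, neg_neg, smul_smul, ← sq]
  rw [neg_add_eq_zero, neg_add_eq_zero, star_rel, add_comm (r ^ 2 • _), eq_comm (a := r • (γ * α))]
  tauto

theorem suqMatrix_mul_conjTranspose_self_eq_one_iff (hr : IsSelfAdjoint r) (α γ : A) :
    suqMatrix r α γ * (suqMatrix r α γ)ᴴ = 1 ↔
      α * star α + algebraMap R A (r ^ 2) * (star γ * γ) = 1 ∧
        α * star γ = algebraMap R A r * (star γ * α) ∧ γ * star γ + star α * α = 1 := by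
  have star_rel : γ * star α = r • (star α * γ) ↔ α * star γ = r • (star γ * α) := by
    rw [← star_inj]
    simp [star_smul, hr.star_eq]
  simp only [suqMatrix, ← Algebra.smul_def, Matrix.conjTranspose_fin_two, Matrix.mul_fin_two,
    Matrix.one_fin_two, EmbeddingLike.apply_eq_iff_eq, Matrix.vecCons_inj, and_true, star_smul,
    star_star, star_neg, hr.star_eq, smul_mul_assoc, mul_smul_comm, neg_smul, smul_neg, mul_neg,
    neg_mul, neg_neg, smul_smul, ← sq]
  rw [add_neg_eq_zero, add_neg_eq_zero, star_rel]
  tauto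

theorem suqMatrix_mem_unitary_iff (hr : IsSelfAdjoint r) (α γ : A) :
    suqMatrix r α γ ∈ unitary (Matrix (Fin 2) (Fin 2) A) ↔
      α * γ = algebraMap R A r * (γ * α) ∧ α * star γ = algebraMap R A r * (star γ * α) ∧
        γ * star γ = star γ * γ ∧ star α * α + star γ * γ = 1 ∧
        α * star α + algebraMap R A (r ^ 2) * (γ * star γ) = 1 := by
  rw [Unitary.mem_iff, Matrix.star_eq_conjTranspose, suqMatrix_conjTranspose_mul_self_eq_one_iff hr,
    suqMatrix_mul_conjTranspose_self_eq_one_iff hr]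
  constructor
  · rintro ⟨⟨h₁, hγα, h₂⟩, -, hγ'α, h₃⟩
    have normal : γ * star γ = star γ * γ :=
      calc γ * star γ = 1 - star α * α := eq_sub_of_add_eq h₃
        _ = star γ * γ := (eq_sub_of_add_eq' h₁).symm
    exact ⟨hγα, hγ'α, normal, h₁, h₂⟩
  · rintro ⟨hγα, hγ'α, normal, h₁, h₂⟩
    refine ⟨⟨h₁, hγα, h₂⟩, by rwa [← normal], hγ'α, ?_⟩
    rwa [normal, add_comm]

theorem mem_unitary_and_eq_twistMatrix_mul_map_star_mul_twistMatrixInv_iff (hr₀ : r ≠ 0)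
    (hr : IsSelfAdjoint r) (u : Matrix (Fin 2) (Fin 2) A) :
    u ∈ unitary (Matrix (Fin 2) (Fin 2) A) ∧ u = twistMatrix r * u.map star * twistMatrixInv r ↔
      ∃ α γ : A, u = suqMatrix r α γ ∧
        α * γ = algebraMap R A r * (γ * α) ∧ α * star γ = algebraMap R A r * (star γ * α) ∧
        γ * star γ = star γ * γ ∧ star α * α + star γ * γ = 1 ∧
        α * star α + algebraMap R A (r ^ 2) * (γ * star γ) = 1 := by
  rw [eq_twistMatrix_mul_map_star_mul_twistMatrixInv_iff hr₀ hr]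
  constructor
  · rintro ⟨hu, α, γ, rfl⟩
    exact ⟨α, γ, rfl, (suqMatrix_mem_unitary_iff hr α γ).1 hu⟩
  · rintro ⟨α, γ, rfl, h⟩
    exact ⟨(suqMatrix_mem_unitary_iff hr α γ).2 h, α, γ, rfl⟩

end SUq

theorem stmt10_general {A : Type*} [NormedRing A] [StarRing A]
    [NormedAlgebra ℂ A] [StarModule ℂ A]
    (q : ℝ) (hq : q ∈ Set.Ico (-1 : ℝ) 0)
    (u : Matrix (Fin 2) (Fin 2) A)
    (G Ginv : Matrix (Fin 2) (Fin 2) A)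
    (hG : G = !![0, algebraMap ℂ A (-(q : ℂ)); 1, 0])
    (hGinv : Ginv = !![0, 1; algebraMap ℂ A (-(q : ℂ)⁻¹), 0]) :
    (G * Ginv = 1 ∧ Ginv * G = 1) ∧
    ((u.conjTranspose * u = 1 ∧ u * u.conjTranspose = 1 ∧ u = G * u.map star * Ginv) ↔
      (∃ α γ : A,
        u = !![α, algebraMap ℂ A (-(q : ℂ)) * star γ; γ, star α] ∧
        α * γ = algebraMap ℂ A (q : ℂ) * (γ * α) ∧
        α * star γ = algebraMap ℂ A (q : ℂ) * (star γ * α) ∧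
        γ * star γ = star γ * γ ∧
        star α * α + star γ * γ = 1 ∧
        α * star α + algebraMap ℂ A ((q : ℂ) ^ 2) * (γ * star γ) = 1)) := by
  have hq₀ : (q : ℂ) ≠ 0 := Complex.ofReal_ne_zero.mpr hq.2.ne
  have hq_sa : IsSelfAdjoint (q : ℂ) := Complex.conj_ofReal q
  subst hG hGinv
  refine ⟨⟨twistMatrix_mul_twistMatrixInv hq₀, twistMatrixInv_mul_twistMatrix hq₀⟩, ?_⟩
  rw [← and_assoc]
  exact mem_unitary_and_eq_twistMatrix_mul_map_star_mul_twistMatrixInv_iff hq₀ hq_sa u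

/-- Characterization of the defining relations of `A_o(F) = C(SU_q(2))`:
a unitary `2×2` matrix `u` over a unital C*-algebra `A` satisfies `u = G ū G⁻¹`
(with `G = [[0, -q·1],[1, 0]]`, whose inverse is `[[0, 1],[-q⁻¹·1, 0]]`)
iff it is of the form `[[α, -qγ*],[γ, α*]]` with `α, γ` satisfying Woronowicz's relations. -/
theorem stmt10 {A : Type*} [NormedRing A] [StarRing A] [CStarRing A]
    [NormedAlgebra ℂ A] [StarModule ℂ A] [CompleteSpace A]
    (q : ℝ) (hq : q ∈ Set.Ico (-1 : ℝ) 0)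
    (u : Matrix (Fin 2) (Fin 2) A)
    (G Ginv : Matrix (Fin 2) (Fin 2) A)
    (hG : G = !![0, algebraMap ℂ A (-(q : ℂ)); 1, 0])
    (hGinv : Ginv = !![0, 1; algebraMap ℂ A (-(q : ℂ)⁻¹), 0]) :
    (G * Ginv = 1 ∧ Ginv * G = 1) ∧
    ((u.conjTranspose * u = 1 ∧ u * u.conjTranspose = 1 ∧ u = G * u.map star * Ginv) ↔
      (∃ α γ : A,
        u = !![α, algebraMap ℂ A (-(q : ℂ)) * star γ; γ, star α] ∧
        α * γ = algebraMap ℂ A (q : ℂ) * (γ * α) ∧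
        α * star γ = algebraMap ℂ A (q : ℂ) * (star γ * α) ∧
        γ * star γ = star γ * γ ∧
        star α * α + star γ * γ = 1 ∧
        α * star α + algebraMap ℂ A ((q : ℂ) ^ 2) * (γ * star γ) = 1)) :=
  stmt10_general q hq u G Ginv hG hGinv
end

section
/- Let q ∈ (−1,0), let a ∈ ℂ with |a|² = −q, set b = conj(a), and let z ∈ ℂ with |z| = 1. Define α(z) = (q²az;q)_∞ (q²az⁻¹;q)_∞ (q²bz;q)_∞ (q²bz⁻¹;q)_∞ (q²;q)_∞ / [ (q²z²;q)_∞ (q²;q)_∞² (q²z⁻²;q)_∞ (−q³;q)_∞ ], φ(z) = ∑_{k=0}^∞ q^{2k} · (−q²;q)_k (−iq²;q)_k (iq²;q)_k (q²;q)_k (bz;q)_k (bz⁻¹;q)_k (az;q)_k (az⁻¹;q)_k / [ (q;q)_k (−iq;q)_k (iq;q)_k (−q;q)_k (q²az⁻¹;q)_k (q²az;q)_k (q²bz⁻¹;q)_k (q²bz;q)_k ], and β(z) = (q;q)_∞ (−q;q)_∞ (z²;q)_∞ (z⁻²;q)_∞ / [ (az;q)_∞ (az⁻¹;q)_∞ (bz;q)_∞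 (bz⁻¹;q)_∞ ]. Then all the infinite products and series involved converge, all denominators are nonzero, and α(z) φ(z) β(z) = (z²;q)₂ (z⁻²;q)₂ ∑_{k=0}^∞ q^{2k}(1−q^{4(k+1)}) / [ (q^k az;q)₂ (q^k az⁻¹;q)₂ (q^k bz;q)₂ (q^k bz⁻¹;q)₂ ]. -/
/-- The finite q-Pochhammer symbol `(x;q)_k = ∏_{j=0}^{k-1} (1 - x q^j)`. -/
noncomputable def qPoch (x : ℂ) (q : ℝ) (k : ℕ) : ℂ :=
  ∏ j ∈ Finset.range k, (1 - x * (q : ℂ) ^ j)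

/-- The infinite q-Pochhammer symbol `(x;q)_∞ = ∏_{j=0}^{∞} (1 - x q^j)`. -/
noncomputable def qPochInf (x : ℂ) (q : ℝ) : ℂ :=
  ∏' j : ℕ, (1 - x * (q : ℂ) ^ j)

/-- The prefactor `α(z)` of the Poisson kernel decomposition. -/
noncomputable def alphaF (q : ℝ) (a b z : ℂ) : ℂ :=
  qPochInf ((q : ℂ) ^ 2 * a * z) q * qPochInf ((q : ℂ) ^ 2 * a * z⁻¹) q *
      qPochInf ((q : ℂ) ^ 2 * b * z) q * qPochInf ((q : ℂ) ^ 2 * b * z⁻¹) q *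
      qPochInf ((q : ℂ) ^ 2) q /
    (qPochInf ((q : ℂ) ^ 2 * z ^ 2) q * qPochInf ((q : ℂ) ^ 2) q ^ 2 *
      qPochInf ((q : ℂ) ^ 2 * z⁻¹ ^ 2) q * qPochInf (-(q : ℂ) ^ 3) q)

/-- The `k`-th term of the very-well-poised series `φ(z)`. -/
noncomputable def phiTerm (q : ℝ) (a b z : ℂ) (k : ℕ) : ℂ :=
  (q : ℂ) ^ (2 * k) *
    (qPoch (-(q : ℂ) ^ 2) q k * qPoch (-Complex.I * (q : ℂ) ^ 2) q k *
      qPoch (Complex.I * (q : ℂ) ^ 2) q k * qPoch ((q : ℂ) ^ 2) q k *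
      qPoch (b * z) q k * qPoch (b * z⁻¹) q k * qPoch (a * z) q k * qPoch (a * z⁻¹) q k) /
    (qPoch (q : ℂ) q k * qPoch (-Complex.I * (q : ℂ)) q k * qPoch (Complex.I * (q : ℂ)) q k *
      qPoch (-(q : ℂ)) q k * qPoch ((q : ℂ) ^ 2 * a * z⁻¹) q k * qPoch ((q : ℂ) ^ 2 * a * z) q k *
      qPoch ((q : ℂ) ^ 2 * b * z⁻¹) q k * qPoch ((q : ℂ) ^ 2 * b * z) q k)

/-- The density `β(z)` of the Askey–Wilson measure factor. -/
noncomputable def betaF (q : ℝ) (a b z : ℂ) : ℂ :=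
  qPochInf (q : ℂ) q * qPochInf (-(q : ℂ)) q * qPochInf (z ^ 2) q * qPochInf (z⁻¹ ^ 2) q /
    (qPochInf (a * z) q * qPochInf (a * z⁻¹) q * qPochInf (b * z) q * qPochInf (b * z⁻¹) q)

/-!
Since `|a|² = |b|² = -q < 1` and `|z| = 1`, every parameter of a q-Pochhammer symbol below has
modulus `< 1`, so no factor vanishes, and the products converge because `∑ |x q^j| < ∞`.

The series `φ` is termwise a constant multiple of the right-hand series. Each numerator
`(c;q)_k` with `c ∈ {az, az⁻¹, bz, bz⁻¹}` pairs with `(q²c;q)_k` in the denominator, and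
`(c;q)_k / (q²c;q)_k = (c;q)_2 / (q^k c;q)_2` because both sides come from `(c;q)_{k+2}`.
The remaining four quotients are `(qx;q)_k / (x;q)_k = (1 - q^k x) / (1 - x)` for the fourth
roots `x ∈ {±q, ±iq}`, whose product is `(1 - q^{4(k+1)}) / (1 - q⁴)`. Hence
`φ_k = C · q^{2k} (1 - q^{4(k+1)}) / ∏ (q^k c;q)_2` with `C = ∏ (c;q)_2 / (1 - q⁴)`, and
splitting `(x;q)_∞ = (x;q)_n (q^n x;q)_∞` shows that `α C β` collapses to `(z²;q)_2 (z⁻²;q)_2`.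
The right-hand series is dominated by `2 |q|^{2k} / ∏ (1 - |c|)²`.
-/

open Complex Finset

section QPochhammer

variable {q : ℝ} {x y w : ℂ}

lemma qPoch_one (x : ℂ) : qPoch x q 1 = 1 - x := by simp [qPoch]

lemma qPoch_two (x : ℂ) : qPoch x q 2 = (1 - x) * (1 - x * q) := by
  simp [qPoch, prod_range_succ]

lemma qPoch_add (x : ℂ) (m n : ℕ) :
    qPoch x q (m + n) = qPoch x q m * qPoch ((q : ℂ) ^ m * x) q n := by
  simp only [qPoch, prod_range_add, pow_add]
  congr 1
  exact prod_congr rfl fun j _ => by ring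

lemma qPoch_mul_qPoch_comm (x : ℂ) (k n : ℕ) :
    qPoch x q k * qPoch ((q : ℂ) ^ k * x) q n = qPoch x q n * qPoch ((q : ℂ) ^ n * x) q k := by
  rw [← qPoch_add, ← qPoch_add, add_comm]

lemma one_sub_mul_pow_ne_zero (hq : |q| ≤ 1) (hx : ‖x‖ < 1) (j : ℕ) : 1 - x * (q : ℂ) ^ j ≠ 0 := by
  refine sub_ne_zero.2 fun h => ?_
  have : ‖x * (q : ℂ) ^ j‖ < 1 := by
    rw [norm_mul, norm_pow, norm_real, Real.norm_eq_abs]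
    exact mul_lt_one_of_nonneg_of_lt_one_left (norm_nonneg x) hx (pow_le_one₀ (abs_nonneg q) hq)
  simp [← h] at this

lemma qPoch_ne_zero (hq : |q| ≤ 1) (hx : ‖x‖ < 1) (k : ℕ) : qPoch x q k ≠ 0 :=
  prod_ne_zero_iff.2 fun j _ => one_sub_mul_pow_ne_zero hq hx j

lemma norm_pow_mul_le (hq : |q| ≤ 1) (x : ℂ) (k : ℕ) : ‖(q : ℂ) ^ k * x‖ ≤ ‖x‖ := by
  rw [norm_mul, norm_pow, norm_real, Real.norm_eq_abs]
  exact mul_le_of_le_one_left (norm_nonneg x) (pow_le_one₀ (abs_nonneg q) hq)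

lemma norm_pow_mul_mul_lt_one (hq : |q| ≤ 1) {c w : ℂ} (hc : ‖c‖ < 1) (hw : ‖w‖ = 1) (k : ℕ) :
    ‖(q : ℂ) ^ k * c * w‖ < 1 := by
  rw [norm_mul, hw, mul_one]
  exact (norm_pow_mul_le hq c k).trans_lt hc

-- The shifted parameters enter through equations, so that instances can be stated in the exact
-- syntactic shape in which they occur in `phiTerm`, `alphaF` and `betaF`.
lemma qPoch_div_qPoch_eq (hq : |q| ≤ 1) (hx : ‖x‖ < 1) {n k : ℕ} (hy : (q : ℂ) ^ n * x = y)
    (hw : (q : ℂ) ^ k * x = w) : qPoch x q k / qPoch y q k = qPoch x q n / qPoch w q n := by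
  rw [div_eq_div_iff (qPoch_ne_zero hq (hy ▸ (norm_pow_mul_le hq x n).trans_lt hx) k)
    (qPoch_ne_zero hq (hw ▸ (norm_pow_mul_le hq x k).trans_lt hx) n), ← hy, ← hw,
    qPoch_mul_qPoch_comm]

lemma qPoch_div_qPoch_of_mul_eq (hq : |q| ≤ 1) (hx : ‖x‖ < 1) (hy : (q : ℂ) * x = y) (k : ℕ) :
    qPoch y q k / qPoch x q k = (1 - (q : ℂ) ^ k * x) / (1 - x) := by
  rw [← inv_div, qPoch_div_qPoch_eq hq hx (n := 1) (by rwa [pow_one]) rfl, qPoch_one, qPoch_one,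
    inv_div]

lemma sq_one_sub_le_norm_qPoch_two {r : ℝ} (hq : |q| ≤ 1) (hx : ‖x‖ ≤ r) (hr : r ≤ 1) :
    (1 - r) ^ 2 ≤ ‖qPoch x q 2‖ := by
  have hxq : ‖x * (q : ℂ)‖ ≤ r := by
    simpa [mul_comm] using (norm_pow_mul_le hq x 1).trans hx
  have h1 : 1 - ‖x‖ ≤ ‖1 - x‖ := by simpa using norm_sub_norm_le (1 : ℂ) x
  have h2 : 1 - ‖x * (q : ℂ)‖ ≤ ‖1 - x * q‖ := by simpa using norm_sub_norm_le (1 : ℂ) (x * q)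
  rw [qPoch_two, norm_mul, sq]
  gcongr <;> linarith

variable (hq : |q| < 1)
include hq

lemma summable_norm_mul_pow (x : ℂ) : Summable fun j : ℕ => ‖x * (q : ℂ) ^ j‖ := by
  simpa [norm_mul, norm_pow] using
    (summable_geometric_of_lt_one (abs_nonneg q) hq).mul_left ‖x‖

lemma multipliable_one_sub_mul_pow (x : ℂ) : Multipliable fun j : ℕ => 1 - x * (q : ℂ) ^ j := by
  simpa only [← sub_eq_add_neg] using
    multipliable_one_add_of_summable (f := fun j : ℕ => -(x * (q : ℂ) ^ j))
      (by simpa only [norm_neg] using summable_norm_mul_pow hq x)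

lemma qPochInf_ne_zero (hx : ‖x‖ < 1) : qPochInf x q ≠ 0 := by
  have := tprod_one_add_ne_zero_of_summable (f := fun j : ℕ => -(x * (q : ℂ) ^ j))
    (fun j => by simpa only [← sub_eq_add_neg] using one_sub_mul_pow_ne_zero hq.le hx j)
    (by simpa only [norm_neg] using summable_norm_mul_pow hq x)
  simpa only [qPochInf, ← sub_eq_add_neg] using this

lemma qPochInf_eq_qPoch_mul_qPochInf (n : ℕ) (hy : (q : ℂ) ^ n * x = y) :
    qPochInf x q = qPoch x q n * qPochInf y q := by
  have hshift : (fun j : ℕ => 1 - x * (q : ℂ) ^ (j + n)) = fun j => 1 - y * (q : ℂ) ^ j := by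
    funext j
    rw [← hy, pow_add]
    ring
  have h := Multipliable.prod_mul_tprod_nat_mul' (f := fun j : ℕ => 1 - x * (q : ℂ) ^ j) (k := n)
    (hshift ▸ multipliable_one_sub_mul_pow hq y)
  rw [qPochInf, ← h, qPochInf, ← hshift, qPoch]

end QPochhammer

lemma one_sub_pow_four (y : ℂ) : 1 - y ^ 4 = (1 - -y) * (1 - -I * y) * (1 - I * y) * (1 - y) := by
  linear_combination (1 - y ^ 2) * y ^ 2 * I_sq

lemma prod_one_sub_mul_div_one_sub_fourth_roots (t y : ℂ) :
    (1 - t * -y) / (1 - -y) * ((1 - t * (-I * y)) / (1 - -I * y)) *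
        ((1 - t * (I * y)) / (1 - I * y)) * ((1 - t * y) / (1 - y)) =
      (1 - (t * y) ^ 4) / (1 - y ^ 4) := by
  rw [one_sub_pow_four, one_sub_pow_four, div_mul_div_comm, div_mul_div_comm, div_mul_div_comm]
  congr 1
  ring

noncomputable def kernelTerm (q : ℝ) (a b z : ℂ) (k : ℕ) : ℂ :=
  (q : ℂ) ^ (2 * k) * (1 - (q : ℂ) ^ (4 * (k + 1))) /
    (qPoch ((q : ℂ) ^ k * a * z) q 2 * qPoch ((q : ℂ) ^ k * a * z⁻¹) q 2 *
      qPoch ((q : ℂ) ^ k * b * z) q 2 * qPoch ((q : ℂ) ^ k * b * z⁻¹) q 2)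

noncomputable def phiScale (q : ℝ) (a b z : ℂ) : ℂ :=
  qPoch (a * z) q 2 * qPoch (a * z⁻¹) q 2 * qPoch (b * z) q 2 * qPoch (b * z⁻¹) q 2 /
    (1 - (q : ℂ) ^ 4)

lemma alphaF_denom_ne_zero {q : ℝ} {z : ℂ} (hq : |q| < 1) (hz : ‖z‖ = 1) :
    qPochInf ((q : ℂ) ^ 2 * z ^ 2) q * qPochInf ((q : ℂ) ^ 2) q ^ 2 *
      qPochInf ((q : ℂ) ^ 2 * z⁻¹ ^ 2) q * qPochInf (-(q : ℂ) ^ 3) q ≠ 0 := by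
  refine mul_ne_zero (mul_ne_zero (mul_ne_zero ?_ (pow_ne_zero _ ?_)) ?_) ?_ <;>
    exact qPochInf_ne_zero hq (by simp [hz, hq, pow_lt_one_iff_of_nonneg])

section PoissonKernel

variable {q : ℝ} {a b z : ℂ} (hq : |q| < 1) (ha : ‖a‖ < 1) (hb : ‖b‖ < 1) (hz : ‖z‖ = 1)
include hq ha hb hz

lemma phiTerm_eq_phiScale_mul_kernelTerm (k : ℕ) :
    phiTerm q a b z k = phiScale q a b z * kernelTerm q a b z k := by
  have hq1 : ‖(q : ℂ)‖ < 1 := by simpa using hq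
  have hIq : ‖I * (q : ℂ)‖ < 1 := by simpa using hq
  have haz : ‖a * z‖ < 1 := by simpa [hz] using ha
  have haz' : ‖a * z⁻¹‖ < 1 := by simpa [hz] using ha
  have hbz : ‖b * z‖ < 1 := by simpa [hz] using hb
  have hbz' : ‖b * z⁻¹‖ < 1 := by simpa [hz] using hb
  have regroup : phiTerm q a b z k = (q : ℂ) ^ (2 * k) *
      (qPoch (-(q : ℂ) ^ 2) q k / qPoch (-q) q k *
        (qPoch (-I * (q : ℂ) ^ 2) q k / qPoch (-I * q) q k) *
        (qPoch (I * (q : ℂ) ^ 2) q k / qPoch (I * q) q k) *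
        (qPoch ((q : ℂ) ^ 2) q k / qPoch q q k)) *
      (qPoch (a * z) q k / qPoch ((q : ℂ) ^ 2 * a * z) q k *
        (qPoch (a * z⁻¹) q k / qPoch ((q : ℂ) ^ 2 * a * z⁻¹) q k) *
        (qPoch (b * z) q k / qPoch ((q : ℂ) ^ 2 * b * z) q k) *
        (qPoch (b * z⁻¹) q k / qPoch ((q : ℂ) ^ 2 * b * z⁻¹) q k)) := by
    rw [phiTerm]
    ring
  rw [regroup,
    qPoch_div_qPoch_of_mul_eq hq.le (x := -q) (y := -(q : ℂ) ^ 2) (by rwa [norm_neg]) (by ring),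
    qPoch_div_qPoch_of_mul_eq hq.le (x := -I * q) (y := -I * (q : ℂ) ^ 2)
      (by rwa [neg_mul, norm_neg]) (by ring),
    qPoch_div_qPoch_of_mul_eq hq.le (y := I * (q : ℂ) ^ 2) hIq (by ring),
    qPoch_div_qPoch_of_mul_eq hq.le (y := (q : ℂ) ^ 2) hq1 (by ring),
    qPoch_div_qPoch_eq hq.le haz (n := 2) (y := (q : ℂ) ^ 2 * a * z) (w := (q : ℂ) ^ k * a * z)
      (by ring) (by ring),
    qPoch_div_qPoch_eq hq.le haz' (n := 2) (y := (q : ℂ) ^ 2 * a * z⁻¹)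
      (w := (q : ℂ) ^ k * a * z⁻¹) (by ring) (by ring),
    qPoch_div_qPoch_eq hq.le hbz (n := 2) (y := (q : ℂ) ^ 2 * b * z) (w := (q : ℂ) ^ k * b * z)
      (by ring) (by ring),
    qPoch_div_qPoch_eq hq.le hbz' (n := 2) (y := (q : ℂ) ^ 2 * b * z⁻¹)
      (w := (q : ℂ) ^ k * b * z⁻¹) (by ring) (by ring),
    prod_one_sub_mul_div_one_sub_fourth_roots, phiScale, kernelTerm,
    show (q : ℂ) ^ (4 * (k + 1)) = ((q : ℂ) ^ k * q) ^ 4 by ring]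
  ring

lemma summable_kernelTerm : Summable (kernelTerm q a b z) := by
  have hfac : ∀ {c : ℂ} {r : ℝ}, ‖c‖ ≤ r → r < 1 → ∀ k : ℕ,
      (1 - r) ^ 2 ≤ ‖qPoch ((q : ℂ) ^ k * c) q 2‖ :=
    fun hc hr k => sq_one_sub_le_norm_qPoch_two hq.le ((norm_pow_mul_le hq.le _ k).trans hc) hr.le
  obtain ⟨δ, hδ, hden⟩ : ∃ δ > 0, ∀ k : ℕ, δ ≤ ‖qPoch ((q : ℂ) ^ k * a * z) q 2 *
      qPoch ((q : ℂ) ^ k * a * z⁻¹) q 2 * qPoch ((q : ℂ) ^ k * b * z) q 2 *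
      qPoch ((q : ℂ) ^ k * b * z⁻¹) q 2‖ := by
    refine ⟨(1 - ‖a‖) ^ 2 * (1 - ‖a‖) ^ 2 * (1 - ‖b‖) ^ 2 * (1 - ‖b‖) ^ 2,
      by have := sub_pos.2 ha; have := sub_pos.2 hb; positivity, fun k => ?_⟩
    simp only [norm_mul, mul_assoc _ _ z, mul_assoc _ _ z⁻¹]
    gcongr <;> refine hfac ?_ ?_ k <;> simp [hz, ha, hb]
  have hnum : ∀ k : ℕ, ‖(q : ℂ) ^ (2 * k) * (1 - (q : ℂ) ^ (4 * (k + 1)))‖ ≤ 2 * (|q| ^ 2) ^ k := by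
    intro k
    have h1 : ‖1 - (q : ℂ) ^ (4 * (k + 1))‖ ≤ 2 := by
      have := pow_le_one₀ (n := 4 * (k + 1)) (abs_nonneg q) hq.le
      refine (norm_sub_le _ _).trans ?_
      rw [norm_one, norm_pow, norm_real, Real.norm_eq_abs]
      linarith
    rw [norm_mul, norm_pow, norm_real, Real.norm_eq_abs, pow_mul, mul_comm]
    gcongr
  have hgeom := (summable_geometric_of_lt_one (sq_nonneg |q|) (by simpa using hq)).mul_left (2 / δ)
  refine .of_norm_bounded hgeom fun k => ?_
  calc ‖kernelTerm q a b z k‖ ≤ 2 * (|q| ^ 2) ^ k / δ := by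
        rw [kernelTerm, norm_div]
        exact div_le_div₀ (by positivity) (hnum k) hδ (hden k)
    _ = 2 / δ * (|q| ^ 2) ^ k := by ring

lemma betaF_denom_ne_zero :
    qPochInf (a * z) q * qPochInf (a * z⁻¹) q * qPochInf (b * z) q * qPochInf (b * z⁻¹) q ≠ 0 := by
  refine mul_ne_zero (mul_ne_zero (mul_ne_zero ?_ ?_) ?_) ?_ <;>
    exact qPochInf_ne_zero hq (by simp [hz, ha, hb])

lemma phiTerm_denom_ne_zero (k : ℕ) :
    qPoch (q : ℂ) q k * qPoch (-I * (q : ℂ)) q k * qPoch (I * (q : ℂ)) q k *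
      qPoch (-(q : ℂ)) q k * qPoch ((q : ℂ) ^ 2 * a * z⁻¹) q k * qPoch ((q : ℂ) ^ 2 * a * z) q k *
      qPoch ((q : ℂ) ^ 2 * b * z⁻¹) q k * qPoch ((q : ℂ) ^ 2 * b * z) q k ≠ 0 := by
  have hz' : ‖z⁻¹‖ = 1 := by simp [hz]
  refine mul_ne_zero (mul_ne_zero (mul_ne_zero (mul_ne_zero (mul_ne_zero (mul_ne_zero
    (mul_ne_zero ?_ ?_) ?_) ?_) ?_) ?_) ?_) ?_ <;> refine qPoch_ne_zero hq.le ?_ k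
  any_goals exact norm_pow_mul_mul_lt_one hq.le ‹_› ‹_› 2
  all_goals simp [hq]

lemma kernelTerm_denom_ne_zero (k : ℕ) :
    qPoch ((q : ℂ) ^ k * a * z) q 2 * qPoch ((q : ℂ) ^ k * a * z⁻¹) q 2 *
      qPoch ((q : ℂ) ^ k * b * z) q 2 * qPoch ((q : ℂ) ^ k * b * z⁻¹) q 2 ≠ 0 := by
  have hz' : ‖z⁻¹‖ = 1 := by simp [hz]
  refine mul_ne_zero (mul_ne_zero (mul_ne_zero ?_ ?_) ?_) ?_ <;>
    exact qPoch_ne_zero hq.le (norm_pow_mul_mul_lt_one hq.le ‹_› ‹_› k) 2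

lemma alphaF_mul_phiScale_mul_betaF :
    alphaF q a b z * phiScale q a b z * betaF q a b z =
      qPoch (z ^ 2) q 2 * qPoch (z⁻¹ ^ 2) q 2 := by
  have hz' : ‖z⁻¹‖ = 1 := by simp [hz]
  have hsplit : ∀ {c w : ℂ}, ‖c‖ < 1 → ‖w‖ = 1 →
      qPoch (c * w) q 2 * qPochInf ((q : ℂ) ^ 2 * c * w) q ≠ 0 := fun hc hw =>
    mul_ne_zero (qPoch_ne_zero hq.le (by simpa [hw] using hc) 2)
      (qPochInf_ne_zero hq (norm_pow_mul_mul_lt_one hq.le hc hw 2))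
  have h4 : (1 : ℂ) - (q : ℂ) ^ 4 = qPoch (q : ℂ) q 1 * qPoch (-(q : ℂ)) q 2 := by
    rw [qPoch_one, qPoch_two]
    ring
  have hden := mul_ne_zero (mul_ne_zero (alphaF_denom_ne_zero hq hz)
    (mul_ne_zero (qPoch_ne_zero hq.le (x := q) (by simpa using hq) 1)
      (qPoch_ne_zero hq.le (x := -q) (by simpa using hq) 2)))
    (mul_ne_zero (mul_ne_zero (mul_ne_zero (hsplit ha hz) (hsplit ha hz')) (hsplit hb hz))
      (hsplit hb hz'))
  rw [alphaF, phiScale, betaF, h4,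
    qPochInf_eq_qPoch_mul_qPochInf hq 2 (x := a * z) (y := (q : ℂ) ^ 2 * a * z) (by ring),
    qPochInf_eq_qPoch_mul_qPochInf hq 2 (x := a * z⁻¹) (y := (q : ℂ) ^ 2 * a * z⁻¹) (by ring),
    qPochInf_eq_qPoch_mul_qPochInf hq 2 (x := b * z) (y := (q : ℂ) ^ 2 * b * z) (by ring),
    qPochInf_eq_qPoch_mul_qPochInf hq 2 (x := b * z⁻¹) (y := (q : ℂ) ^ 2 * b * z⁻¹) (by ring),
    qPochInf_eq_qPoch_mul_qPochInf hq 2 (x := z ^ 2) (y := (q : ℂ) ^ 2 * z ^ 2) (by ring),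
    qPochInf_eq_qPoch_mul_qPochInf hq 2 (x := z⁻¹ ^ 2) (y := (q : ℂ) ^ 2 * z⁻¹ ^ 2) (by ring),
    qPochInf_eq_qPoch_mul_qPochInf hq 1 (x := q) (y := (q : ℂ) ^ 2) (by ring),
    qPochInf_eq_qPoch_mul_qPochInf hq 2 (x := -q) (y := -(q : ℂ) ^ 3) (by ring),
    div_mul_div_comm, div_mul_div_comm, div_eq_iff hden]
  ring

end PoissonKernel

theorem stmt15 (q : ℝ) (hq : q ∈ Set.Ioo (-1 : ℝ) 0) (a b z : ℂ)
    (ha : ‖a‖ ^ 2 = -q) (hb : b = starRingEnd ℂ a) (hz : ‖z‖ = 1) :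
    (∀ x : ℂ, Multipliable (fun j : ℕ => 1 - x * (q : ℂ) ^ j)) ∧
    (qPochInf ((q : ℂ) ^ 2 * z ^ 2) q * qPochInf ((q : ℂ) ^ 2) q ^ 2 *
      qPochInf ((q : ℂ) ^ 2 * z⁻¹ ^ 2) q * qPochInf (-(q : ℂ) ^ 3) q ≠ 0) ∧
    (qPochInf (a * z) q * qPochInf (a * z⁻¹) q * qPochInf (b * z) q * qPochInf (b * z⁻¹) q ≠ 0) ∧
    (∀ k : ℕ,
      qPoch (q : ℂ) q k * qPoch (-Complex.I * (q : ℂ)) q k * qPoch (Complex.I * (q : ℂ)) q k *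
        qPoch (-(q : ℂ)) q k * qPoch ((q : ℂ) ^ 2 * a * z⁻¹) q k * qPoch ((q : ℂ) ^ 2 * a * z) q k *
        qPoch ((q : ℂ) ^ 2 * b * z⁻¹) q k * qPoch ((q : ℂ) ^ 2 * b * z) q k ≠ 0) ∧
    Summable (phiTerm q a b z) ∧
    (∀ k : ℕ,
      qPoch ((q : ℂ) ^ k * a * z) q 2 * qPoch ((q : ℂ) ^ k * a * z⁻¹) q 2 *
        qPoch ((q : ℂ) ^ k * b * z) q 2 * qPoch ((q : ℂ) ^ k * b * z⁻¹) q 2 ≠ 0) ∧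
    alphaF q a b z * (∑' k : ℕ, phiTerm q a b z k) * betaF q a b z =
      qPoch (z ^ 2) q 2 * qPoch (z⁻¹ ^ 2) q 2 *
        ∑' k : ℕ, (q : ℂ) ^ (2 * k) * (1 - (q : ℂ) ^ (4 * (k + 1))) /
          (qPoch ((q : ℂ) ^ k * a * z) q 2 * qPoch ((q : ℂ) ^ k * a * z⁻¹) q 2 *
            qPoch ((q : ℂ) ^ k * b * z) q 2 * qPoch ((q : ℂ) ^ k * b * z⁻¹) q 2) := by
  have hq1 : |q| < 1 := abs_lt.2 ⟨hq.1, hq.2.trans one_pos⟩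
  have ha1 : ‖a‖ < 1 := (sq_lt_one_iff₀ (norm_nonneg a)).1 (by linarith [hq.1])
  have hb1 : ‖b‖ < 1 := by rwa [hb, Complex.norm_conj]
  have hphi : phiTerm q a b z = fun k => phiScale q a b z * kernelTerm q a b z k :=
    funext (phiTerm_eq_phiScale_mul_kernelTerm hq1 ha1 hb1 hz)
  refine ⟨multipliable_one_sub_mul_pow hq1, alphaF_denom_ne_zero hq1 hz,
    betaF_denom_ne_zero hq1 ha1 hb1 hz, phiTerm_denom_ne_zero hq1 ha1 hb1 hz,
    hphi ▸ (summable_kernelTerm hq1 ha1 hb1 hz).mul_left _, kernelTerm_denom_ne_zero hq1 ha1 hb1 hz,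
    ?_⟩
  calc alphaF q a b z * (∑' k, phiTerm q a b z k) * betaF q a b z
      = alphaF q a b z * phiScale q a b z * betaF q a b z * ∑' k, kernelTerm q a b z k := by
        rw [hphi, tsum_mul_left]
        ring
    _ = _ := by rw [alphaF_mul_phiScale_mul_betaF hq1 ha1 hb1 hz]; rfl
end

section
/- Let q ∈ (−1,0) and let k ≥ 0 be an integer. Then 2(1+q)/(1−q) · ∑_{r=0}^k (−1)^r C(2k+1, k−r) · (1−q^{2r+1}) / ((1+q^r)(1+q^{r+1})) = (q+1)/(q−1) · 1/(k+1) · ∑_{r=−k−1}^{k+1} (−1)^r C(2k+2, k+1+r) · r/(1+q^r), where C(m,j) is the binomial coefficient, the r = 0 term of the right-hand sum is 0, and all denominators 1+q^r (r ∈ ℤ) are nonzero since |q^r| ≠ 1 for r ≠ 0. -/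
/-!
Write `f s = (1 - q ^ s) / (1 + q ^ s)`. Each left-hand summand is `(f r + f (r + 1)) / 2`, and
summation by parts, driven by `(k + 1) (C(2k+1, j) - C(2k+1, j+1)) = (j - k) C(2k+2, j+1)`,
turns `2 (k + 1)` times the left-hand sum into `∑ (-1)^r (r + 1) C(2k+2, k+2+r) f (r + 1)`.
On the right, pairing `r` with `-r` and using `1 / (1 + q ^ r) - 1 / (1 + q ^ (-r)) = f r` gives
the same sum with the opposite sign, which the prefactor `(q + 1) / (q - 1) = -(1 + q) / (1 - q)`
absorbs.
-/

open Finset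

theorem one_add_zpow_ne_zero {q : ℝ} (hq : |q| ≠ 1) (r : ℤ) : 1 + q ^ r ≠ 0 := by
  intro h
  have habs : |q| ^ r = 1 := by
    rw [← abs_zpow, eq_neg_of_add_eq_zero_right h, abs_neg, abs_one]
  obtain rfl : r = 0 := (zpow_eq_one_iff_right₀ (abs_nonneg q) hq).mp habs
  norm_num at h

theorem add_one_mul_choose_sub_choose_add_one {R : Type*} [CommRing R] (n j : ℕ) :
    ((n : R) + 1) * ((Nat.choose (2 * n + 1) j : R) - Nat.choose (2 * n + 1) (j + 1)) =
      ((j : R) - n) * Nat.choose (2 * n + 2) (j + 1) := by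
  have key : ((n : ℤ) + 1) * ((Nat.choose (2 * n + 1) j : ℤ) - Nat.choose (2 * n + 1) (j + 1)) =
      ((j : ℤ) - n) * Nat.choose (2 * n + 2) (j + 1) := by
    rcases le_or_gt j (2 * n + 1) with hj | hj
    · have h₁ := Nat.choose_succ_right_eq (2 * n + 1) j
      have h₂ := Nat.add_one_mul_choose_eq (2 * n + 1) j
      refine mul_right_cancel₀ (b := (j : ℤ) + 1) (by positivity) ?_
      zify [hj] at h₁ h₂
      linear_combination -((n : ℤ) + 1) * h₁ + ((j : ℤ) - n) * h₂
    · simp [Nat.choose_eq_zero_of_lt hj, Nat.choose_eq_zero_of_lt (Nat.lt_succ_of_lt hj),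
        Nat.choose_eq_zero_of_lt (show 2 * n + 2 < j + 1 by omega)]
  exact_mod_cast congrArg (Int.cast : ℤ → R) key

theorem sum_range_mul_add_add_mul {R : Type*} [CommRing R] (c g : ℕ → R) (n : ℕ) :
    ∑ r ∈ range n, c r * (g r + g (r + 1)) + c n * g n =
      c 0 * g 0 + ∑ r ∈ range n, (c r + c (r + 1)) * g (r + 1) := by
  induction n with
  | zero => simp
  | succ n ih =>
    rw [sum_range_succ, sum_range_succ, ← add_assoc (c 0 * g 0), ← ih]
    ring

theorem sum_Icc_neg_natCast {M : Type*} [AddCommGroup M] (f : ℤ → M) (n : ℕ) :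
    ∑ r ∈ Icc (-(n : ℤ)) n, f r =
      f 0 + ∑ s ∈ range n, (f (s + 1 : ℕ) + f (-(s + 1 : ℕ))) := by
  induction n with
  | zero => simp
  | succ n ih =>
    rw [sum_range_succ, ← add_assoc, ← ih, Nat.cast_add_one, sum_Icc_succ_eq_add_endpoints]
    abel

theorem add_one_mul_sum_alternating_choose_mul_add {R : Type*} [CommRing R] (g : ℕ → R)
    (hg : g 0 = 0) (k : ℕ) :
    (k + 1 : R) * ∑ r ∈ range (k + 1),
        (-1) ^ r * (Nat.choose (2 * k + 1) (k - r) : R) * (g r + g (r + 1)) =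
      ∑ r ∈ range (k + 1),
        (-1) ^ r * (r + 1 : R) * Nat.choose (2 * k + 2) (k + 2 + r) * g (r + 1) := by
  -- `C(2k+1, k+1+r)` rather than `C(2k+1, k-r)`: with truncated subtraction the latter would not
  -- vanish at `r = k + 1`.
  set c : ℕ → R := fun r => (k + 1 : R) * ((-1) ^ r * Nat.choose (2 * k + 1) (k + 1 + r))
  have hc : c (k + 1) = 0 := by
    simp [c, Nat.choose_eq_zero_of_lt (show 2 * k + 1 < k + 1 + (k + 1) by omega)]
  have hsum := sum_range_mul_add_add_mul c g (k + 1)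
  rw [hc, hg, zero_mul, mul_zero, add_zero, zero_add] at hsum
  rw [mul_sum]
  convert hsum using 2 with r hr r hr
  · have hr := mem_range.mp hr
    rw [Nat.choose_symm_of_eq_add (show 2 * k + 1 = (k - r) + (k + 1 + r) by omega)]
    ring
  · have h := add_one_mul_choose_sub_choose_add_one (R := R) k (k + 1 + r)
    push_cast at h
    simp only [c, pow_succ, show k + 2 + r = k + 1 + r + 1 by ring]
    linear_combination -(-1 : R) ^ r * g (r + 1) * h

section Field

variable {K : Type*} [Field K] {q : K}

theorem two_mul_one_sub_mul_div {x y : K} (hx : 1 + x ≠ 0) (hy : 1 + y ≠ 0) :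
    2 * ((1 - x * y) / ((1 + x) * (1 + y))) = (1 - x) / (1 + x) + (1 - y) / (1 + y) := by
  field_simp
  ring

theorem inv_one_add_zpow_sub_inv_one_add_zpow_neg (hq : q ≠ 0) {n : ℤ} (h : 1 + q ^ n ≠ 0) :
    (1 + q ^ n)⁻¹ - (1 + q ^ (-n))⁻¹ = (1 - q ^ n) / (1 + q ^ n) := by
  have hqn : q ^ n ≠ 0 := zpow_ne_zero n hq
  have h' : 1 + (q ^ n)⁻¹ = (1 + q ^ n) / q ^ n := by field_simp; ring
  rw [zpow_neg, h', inv_div]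
  field_simp

theorem two_mul_add_one_mul_sum_range_alternating_choose_mul_div
    (hne : ∀ n : ℕ, 1 + q ^ n ≠ 0) (k : ℕ) :
    2 * (k + 1) * ∑ r ∈ range (k + 1), (-1 : K) ^ r * (Nat.choose (2 * k + 1) (k - r) : K) *
        ((1 - q ^ (2 * r + 1)) / ((1 + q ^ r) * (1 + q ^ (r + 1)))) =
      ∑ r ∈ range (k + 1), (-1) ^ r * (r + 1 : K) * Nat.choose (2 * k + 2) (k + 2 + r) *
        ((1 - q ^ (r + 1)) / (1 + q ^ (r + 1))) := by
  rw [← add_one_mul_sum_alternating_choose_mul_add (fun s => (1 - q ^ s) / (1 + q ^ s))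
    (by simp) k, mul_comm 2, mul_assoc, mul_sum]
  congr 1
  refine sum_congr rfl fun r _ => ?_
  rw [← two_mul_one_sub_mul_div (hne r) (hne (r + 1)), ← pow_add,
    show r + (r + 1) = 2 * r + 1 by ring]
  ring

theorem sum_Icc_alternating_choose_mul_div (hq : q ≠ 0) (hne : ∀ n : ℕ, 1 + q ^ n ≠ 0)
    (k : ℕ) :
    ∑ r ∈ Icc (-(k : ℤ) - 1) ((k : ℤ) + 1),
        (-1 : K) ^ r * (Nat.choose (2 * k + 2) ((k : ℤ) + 1 + r).toNat : K) *
          ((r : K) / (1 + q ^ r)) =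
      -∑ r ∈ range (k + 1), (-1) ^ r * (r + 1 : K) * Nat.choose (2 * k + 2) (k + 2 + r) *
        ((1 - q ^ (r + 1)) / (1 + q ^ (r + 1))) := by
  rw [show Icc (-(k : ℤ) - 1) ((k : ℤ) + 1) =
      Icc (-((k + 1 : ℕ) : ℤ)) ((k + 1 : ℕ) : ℤ) by push_cast; ring_nf,
    sum_Icc_neg_natCast]
  simp only [Int.cast_zero, zero_div, mul_zero, zero_add, ← sum_neg_distrib]
  refine sum_congr rfl fun s hs => ?_
  have hs : s ≤ k := Nat.lt_succ_iff.mp (mem_range.mp hs)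
  have hinv := inv_one_add_zpow_sub_inv_one_add_zpow_neg hq (n := ((s + 1 : ℕ) : ℤ))
    (by exact_mod_cast hne (s + 1))
  rw [show ((k : ℤ) + 1 + ((s + 1 : ℕ) : ℤ)).toNat = k + 2 + s by omega,
    show ((k : ℤ) + 1 + -((s + 1 : ℕ) : ℤ)).toNat = k - s by omega,
    Nat.choose_symm_of_eq_add (show 2 * k + 2 = (k - s) + (k + 2 + s) by omega)]
  simp only [zpow_neg, zpow_natCast, Int.cast_neg, Int.cast_natCast] at hinv ⊢
  rw [← inv_pow, inv_neg_one]
  push_cast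
  linear_combination
    (-1 : K) ^ (s + 1) * (s + 1 : K) * Nat.choose (2 * k + 2) (k + 2 + s) * hinv

end Field

theorem stmt18 (q : ℝ) (hq : q ∈ Set.Ioo (-1 : ℝ) 0) (k : ℕ) :
    2 * (1 + q) / (1 - q) *
        ∑ r ∈ Finset.range (k + 1), (-1 : ℝ) ^ r * (Nat.choose (2 * k + 1) (k - r) : ℝ) *
          ((1 - q ^ (2 * r + 1)) / ((1 + q ^ r) * (1 + q ^ (r + 1)))) =
      (q + 1) / (q - 1) * (1 / (k + 1)) *
        ∑ r ∈ Finset.Icc (-(k : ℤ) - 1) ((k : ℤ) + 1),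
          (-1 : ℝ) ^ r * (Nat.choose (2 * k + 2) ((k : ℤ) + 1 + r).toNat : ℝ) *
            ((r : ℝ) / (1 + q ^ r)) := by
  obtain ⟨hq₁, hq₀⟩ := hq
  have hne (n : ℕ) : 1 + q ^ n ≠ 0 := by
    exact_mod_cast one_add_zpow_ne_zero (by rw [abs_of_neg hq₀]; linarith) n
  have h1q : 1 - q ≠ 0 := by linarith
  have hq1 : q - 1 ≠ 0 := by linarith
  rw [sum_Icc_alternating_choose_mul_div hq₀.ne hne,
    ← two_mul_add_one_mul_sum_range_alternating_choose_mul_div hne]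
  field_simp
  ring
end
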